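/- arXiv:2401.10639 — 2 statements merged into one kernel-verified Lean document; each statement's English description precedes it below -/
import Mathlib

section
/- Let p ∈ [1,∞), let Γ_k be a k-grid, let φ ∈ W^{1,p}(Γ_k,ℝ²), and let M ∈ ℕ. Then for Lebesgue-almost every (w₁,…,w_M) ∈ ℝ^M and Lebesgue-almost every (z₁,…,z_M) ∈ ℝ^M, the set G = ⋃_{n=1}^M {w_n}×ℝ ∪ ⋃_{m=1}^M ℝ×{z_m} is a good arrival grid for φ; namely: (i) F = φ⁻¹(G) is finite and no point of F lies on two distinct segments of Γ_k; (ii) no crossing point (w_n,z_m) of G lies in φ(Γ_k); (iii) at every point of F the tangential derivative D_τφ exists and is linearly independent of the direction of the vertical or horizontal line of G containing its image. -/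
open MeasureTheory Set Filter Topology
open scoped ENNReal NNReal RealInnerProductSpace

noncomputable section

/-- The Euclidean plane. -/
abbrev R2 : Type := EuclideanSpace ℝ (Fin 2)

/-- The point (x,y) of the plane. -/
def pt (x y : ℝ) : R2 := (WithLp.equiv 2 (Fin 2 → ℝ)).symm ![x, y]

/-- The open square (-1,1)². -/
def openSq : Set R2 := {z | z 0 ∈ Ioo (-1:ℝ) 1 ∧ z 1 ∈ Ioo (-1:ℝ) 1}

/-- The closed square [-1,1]². -/
def closedSq : Set R2 := {z | z 0 ∈ Icc (-1:ℝ) 1 ∧ z 1 ∈ Icc (-1:ℝ) 1}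

/-- Lebesgue measure restricted to the open square. -/
def μSq : Measure R2 := volume.restrict openSq

def e₁ : R2 := pt 1 0
def e₂ : R2 := pt 0 1

/-- The unit interval [0,1]. -/
def unitI : Set ℝ := Icc 0 1

/-- Smooth test functions compactly supported in the open square. -/
def IsTestFun (φ : R2 → ℝ) : Prop :=
  ContDiff ℝ (⊤ : ℕ∞) φ ∧ HasCompactSupport φ ∧ tsupport φ ⊆ openSq

/-- `d` is a weak partial derivative of `u` in the direction `v` on `(-1,1)²`:
∫ u ∂_vφ = −∫ d φ for all smooth compactly supported test functions φ. -/
def IsWeakPartialDeriv (v : R2) (u d : R2 → R2) : Prop :=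
  ∀ φ : R2 → ℝ, IsTestFun φ →
    Integrable (fun z => (fderiv ℝ φ z v) • u z) μSq ∧
    Integrable (fun z => φ z • d z) μSq ∧
    ∫ z, (fderiv ℝ φ z v) • u z ∂μSq = - ∫ z, φ z • d z ∂μSq

/-- Membership in W^{1,p}((-1,1)²,ℝ²). -/
def MemW1p (p : ℝ) (u : R2 → R2) : Prop :=
  MemLp u (ENNReal.ofReal p) μSq ∧
  (∃ d, IsWeakPartialDeriv e₁ u d ∧ MemLp d (ENNReal.ofReal p) μSq) ∧
  (∃ d, IsWeakPartialDeriv e₂ u d ∧ MemLp d (ENNReal.ofReal p) μSq)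

open Classical in
/-- A choice of weak partial derivative of `u` in direction `v`
(any two weak partial derivatives agree a.e. on the square). -/
def wDeriv (v : R2) (u : R2 → R2) : R2 → R2 :=
  if h : ∃ d, IsWeakPartialDeriv v u d then h.choose else 0

/-- The W^{1,p}-distance between two maps on (-1,1)². -/
def w1pDist (p : ℝ) (f g : R2 → R2) : ℝ≥0∞ :=
  eLpNorm (f - g) (ENNReal.ofReal p) μSq
    + eLpNorm (wDeriv e₁ f - wDeriv e₁ g) (ENNReal.ofReal p) μSq
    + eLpNorm (wDeriv e₂ f - wDeriv e₂ g) (ENNReal.ofReal p) μSq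

/-- Convergence in the W^{1,p} norm. -/
def W1pTendsto (p : ℝ) (f : ℕ → R2 → R2) (g : R2 → R2) : Prop :=
  Tendsto (fun n => w1pDist p (f n) g) atTop (𝓝 0)

/-- W^{1,p}_0: the closure of the smooth compactly supported maps in the W^{1,p} norm. -/
def MemW1p0 (p : ℝ) (v : R2 → R2) : Prop :=
  MemW1p p v ∧ ∃ f : ℕ → R2 → R2,
    (∀ n, ContDiff ℝ (⊤ : ℕ∞) (f n) ∧ HasCompactSupport (f n) ∧ tsupport (f n) ⊆ openSq) ∧
    W1pTendsto p f v

/-- W^{1,p}_{id}((-1,1)²,ℝ²): Sobolev maps u with u − id ∈ W^{1,p}_0. -/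
def MemW1pId (p : ℝ) (u : R2 → R2) : Prop :=
  MemW1p p u ∧ MemW1p0 p (fun z => u z - z)

/-- `h` restricts to a homeomorphism of (-1,1)² onto (-1,1)². -/
def IsHomeoOfSquare (h : R2 → R2) : Prop :=
  ∃ e : openSq ≃ₜ openSq, ∀ z : openSq, h ↑z = ↑(e z)

/-- `u` belongs to cl(H ∩ W^{1,p}_{id}): there are homeomorphisms h_j of (-1,1)² onto
itself, belonging to W^{1,p}_{id}, with ‖h_j − u‖_{W^{1,p}} → 0. -/
def MemClosureHomeo (p : ℝ) (u : R2 → R2) : Prop :=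
  MemW1pId p u ∧ ∃ h : ℕ → R2 → R2,
    (∀ j, MemW1pId p (h j) ∧ IsHomeoOfSquare (h j)) ∧ W1pTendsto p h u

/-- The size-δ Hausdorff pre-measure H^s_δ. -/
def hausdorffPre (s : ℝ) (δ : ℝ≥0∞) (S : Set R2) : ℝ≥0∞ :=
  ⨅ (t : ℕ → Set R2) (_ : S ⊆ ⋃ n, t n) (_ : ∀ n, EMetric.diam (t n) ≤ δ),
    ∑' n, EMetric.diam (t n) ^ s

/-- A monotone map from [-1,1]² onto its image: continuous, with every point preimage
closed and connected. -/
def IsMonotoneOnSquare (g : R2 → R2) : Prop :=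
  ContinuousOn g closedSq ∧
  ∀ y ∈ g '' closedSq, IsClosed {z ∈ closedSq | g z = y} ∧ IsConnected {z ∈ closedSq | g z = y}

/-- Quasi-monotonicity on [-1,1]²: u is continuous off a set of H¹-measure zero, and for
every δ > 0 there are an open set U with H¹_δ(U) < δ and a monotone map v with u = v off U. -/
def QuasiMonotoneOnSquare (u : R2 → R2) : Prop :=
  (∃ S : Set R2, μH[1] S = 0 ∧ ContinuousOn u (closedSq \ S)) ∧
  ∀ δ : ℝ, 0 < δ → ∃ U : Set R2, IsOpen U ∧
    hausdorffPre 1 (ENNReal.ofReal δ) U < ENNReal.ofReal δ ∧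
    ∃ v : R2 → R2, IsMonotoneOnSquare v ∧ EqOn u v (closedSq \ U)

/-- Data of a grid: vertical lines x = x_i, 0 ≤ i ≤ Mx, and horizontal lines y = y_j,
0 ≤ j ≤ My. -/
structure GridData where
  Mx : ℕ
  My : ℕ
  x : ℕ → ℝ
  y : ℕ → ℝ

/-- `G` is a k-grid: endpoints at ±1 and all consecutive gaps in (2^{-k}, 2^{2-k}). -/
def GridData.IsKGrid (G : GridData) (k : ℕ) : Prop :=
  G.x 0 = -1 ∧ G.x G.Mx = 1 ∧ G.y 0 = -1 ∧ G.y G.My = 1 ∧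
  (∀ i < G.Mx, G.x (i+1) - G.x i ∈ Ioo ((2:ℝ)^(-(k:ℤ))) ((2:ℝ)^((2:ℤ)-k))) ∧
  (∀ j < G.My, G.y (j+1) - G.y j ∈ Ioo ((2:ℝ)^(-(k:ℤ))) ((2:ℝ)^((2:ℤ)-k)))

/-- The subset Γ of [-1,1]² consisting of the union of the segments of the grid. -/
def GridData.carrier (G : GridData) : Set R2 :=
  {z | z 1 ∈ Icc (-1:ℝ) 1 ∧ ∃ i ≤ G.Mx, z 0 = G.x i} ∪
  {z | z 0 ∈ Icc (-1:ℝ) 1 ∧ ∃ j ≤ G.My, z 1 = G.y j}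

/-- `ζ` is a crossing point of the grid `G` (it lies on two distinct segments, i.e. on a
vertical and a horizontal one). -/
def GridData.IsCrossPt (G : GridData) (ζ : R2) : Prop :=
  (∃ i ≤ G.Mx, ζ 0 = G.x i) ∧ (∃ j ≤ G.My, ζ 1 = G.y j)

/-- `f` is absolutely continuous on [a,b] with (integrable) derivative `g`. -/
def IsACDerivOn (f g : ℝ → R2) (a b : ℝ) : Prop :=
  IntegrableOn g (Icc a b) volume ∧ ∀ t ∈ Icc a b, f t = f a + ∫ s in a..t, g s

/-- Membership of `v` in W^{1,p}(Γ,ℝ²), witnessed by the tangential derivatives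
`dv i` on the vertical segments and `dh j` on the horizontal segments. -/
def MemW1pGridWith (p : ℝ) (G : GridData) (v : R2 → R2) (dv dh : ℕ → ℝ → R2) : Prop :=
  (∀ i ≤ G.Mx, IsACDerivOn (fun t => v (pt (G.x i) t)) (dv i) (-1) 1 ∧
    IntegrableOn (fun t => ‖dv i t‖ ^ p) (Icc (-1:ℝ) 1) volume) ∧
  (∀ j ≤ G.My, IsACDerivOn (fun t => v (pt t (G.y j))) (dh j) (-1) 1 ∧
    IntegrableOn (fun t => ‖dh j t‖ ^ p) (Icc (-1:ℝ) 1) volume)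

/-- Membership of `v` in W^{1,p}(Γ,ℝ²). -/
def MemW1pGrid (p : ℝ) (G : GridData) (v : R2 → R2) : Prop :=
  ∃ dv dh, MemW1pGridWith p G v dv dh

/-- The pointwise (Frobenius) norm |Du| of the weak differential of `u`. -/
def weakDiffNorm (u : R2 → R2) (z : R2) : ℝ :=
  Real.sqrt (‖wDeriv e₁ u z‖ ^ 2 + ‖wDeriv e₂ u z‖ ^ 2)

/-- `G` is a suitable k-grid for `u` with constant `C`. -/
def IsSuitableKGrid (p : ℝ) (u : R2 → R2) (C : ℝ) (k : ℕ) (G : GridData) : Prop :=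
  G.IsKGrid k ∧ ∃ dv dh, MemW1pGridWith p G u dv dh ∧
    ∀ q : ℝ, 1 ≤ q → q ≤ p →
      (∀ j ≤ G.My, ∫ t in Icc (-1:ℝ) 1, ‖dh j t‖ ^ q ≤
        C * 2 ^ k *
          ∫ s in Icc (G.y j - 2^(-(k:ℤ)-4)) (G.y j + 2^(-(k:ℤ)-4)),
            ∫ t in Icc (-1:ℝ) 1, weakDiffNorm u (pt t s) ^ q) ∧
      (∀ i ≤ G.Mx, ∫ t in Icc (-1:ℝ) 1, ‖dv i t‖ ^ q ≤
        C * 2 ^ k *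
          ∫ s in Icc (G.x i - 2^(-(k:ℤ)-4)) (G.x i + 2^(-(k:ℤ)-4)),
            ∫ t in Icc (-1:ℝ) 1, weakDiffNorm u (pt s t) ^ q)

/-- A suitable grid system for `u` with constant `C`: an increasing family where each
`Γ k` is a suitable k-grid for `u` with the constant `C`. -/
def IsSuitableGridSystemWith (p : ℝ) (u : R2 → R2) (C : ℝ) (Γ : ℕ → GridData) : Prop :=
  (∀ k, (Γ k).carrier ⊆ (Γ (k+1)).carrier) ∧ ∀ k, IsSuitableKGrid p u C k (Γ k)

/-- A suitable grid system for `u`. -/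
def IsSuitableGridSystem (p : ℝ) (u : R2 → R2) (Γ : ℕ → GridData) : Prop :=
  ∃ C : ℝ, 0 < C ∧ IsSuitableGridSystemWith p u C Γ

/-- The parameters `t` at which the curve ψ meets the image of φ([0,1]) under u. -/
def matchSet (u : R2 → R2) (φ ψ : ℝ → R2) : Set ℝ :=
  {t ∈ unitI | ψ t ∈ (u ∘ φ) '' unitI}

/-- φ, ψ is a pair of good test curves for `u`, relative to the exceptional open sets
`U δ` off which `u` is continuous. -/
def IsGoodTestPair (u : R2 → R2) (U : ℝ → Set R2) (φ ψ : ℝ → R2) : Prop :=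
  (∃ K : ℝ≥0, LipschitzOnWith K φ unitI) ∧ InjOn φ unitI ∧
  (∃ K : ℝ≥0, LipschitzOnWith K ψ unitI) ∧ InjOn ψ unitI ∧
  (∃ δ : ℝ, 0 < δ ∧ MapsTo φ unitI (closedSq \ U δ)) ∧ MapsTo ψ unitI closedSq ∧
  (∀ t ∈ unitI, ψ t ∈ (u ∘ φ) '' unitI → ∃ d, HasDerivWithinAt ψ d unitI t) ∧
  (∀ s ∈ unitI, u (φ s) ∈ ψ '' unitI →
    (∃ d, d ≠ 0 ∧ HasDerivWithinAt φ d unitI s) ∧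
    (∃ d, HasDerivWithinAt (u ∘ φ) d unitI s)) ∧
  {t ∈ unitI | ψ t ∈ (u ∘ φ) '' unitI}.Finite ∧
  {s ∈ unitI | u (φ s) ∈ ψ '' unitI}.Finite ∧
  (∀ s ∈ unitI, ∀ t ∈ unitI, ψ t = u (φ s) →
    ∀ dψ dφ, HasDerivWithinAt ψ dψ unitI t → HasDerivWithinAt (u ∘ φ) dφ unitI s →
      LinearIndependent ℝ ![dψ, dφ])

/-- The three-curve condition for `u`, relative to the exceptional sets `U δ`. -/
def ThreeCurveCond (u : R2 → R2) (U : ℝ → Set R2) : Prop :=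
  ∀ φ ψ : ℝ → R2, IsGoodTestPair u U φ ψ →
    ∃ γ : ℝ → R2,
      (∃ K : ℝ≥0, LipschitzOnWith K γ unitI) ∧ InjOn γ unitI ∧ MapsTo γ unitI closedSq ∧
      ∃ I : ℝ → Set ℝ,
        (∀ t ∈ matchSet u φ ψ, ∃ a b : ℝ, a ≤ b ∧ I t = Icc a b ∧ Icc a b ⊆ unitI) ∧
        (matchSet u φ ψ).PairwiseDisjoint I ∧
        (∀ t ∈ matchSet u φ ψ,
          γ '' I t ∩ φ '' unitI = φ '' {s ∈ unitI | u (φ s) = ψ t}) ∧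
        (∀ t₁ ∈ matchSet u φ ψ, ∀ t₂ ∈ matchSet u φ ψ, t₁ < t₂ →
          ∀ s₁ ∈ I t₁, ∀ s₂ ∈ I t₂, s₁ < s₂) ∧
        (∀ τ ∈ unitI, γ τ ∈ φ '' unitI →
          ∃ dγ, HasDerivWithinAt γ dγ unitI τ ∧
            ∀ s ∈ unitI, φ s = γ τ → ∀ dφ, HasDerivWithinAt φ dφ unitI s →
              LinearIndependent ℝ ![dγ, dφ])

/-- The grid of full vertical lines x = w_n and horizontal lines y = z_m. -/
def arrGridSet (M : ℕ) (w z : Fin M → ℝ) : Set R2 :=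
  {ζ | ∃ n, ζ 0 = w n} ∪ {ζ | ∃ m, ζ 1 = z m}

/-- The lines x = w_n, y = z_m form a good arrival grid for φ : Γ → ℝ²: the preimage of
the arrival grid is finite, avoids crossing points of Γ, the crossing points of the
arrival grid avoid φ(Γ), and at each preimage point the tangential derivative of φ
exists and is transversal to the line of the arrival grid containing the image. -/
def IsGoodArrivalGrid (G : GridData) (φ : R2 → R2) (M : ℕ) (w z : Fin M → ℝ) : Prop :=
  {ζ ∈ G.carrier | φ ζ ∈ arrGridSet M w z}.Finite ∧
  (∀ ζ ∈ {ζ ∈ G.carrier | φ ζ ∈ arrGridSet M w z}, ¬ G.IsCrossPt ζ) ∧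
  (∀ n m, pt (w n) (z m) ∉ φ '' G.carrier) ∧
  (∀ ζ ∈ {ζ ∈ G.carrier | φ ζ ∈ arrGridSet M w z},
    (∀ i, i ≤ G.Mx → ζ 0 = G.x i →
      ∃ d, HasDerivWithinAt (fun t => φ (pt (G.x i) t)) d (Icc (-1:ℝ) 1) (ζ 1) ∧
        (∀ n, (φ ζ) 0 = w n → LinearIndependent ℝ ![d, e₂]) ∧
        (∀ m, (φ ζ) 1 = z m → LinearIndependent ℝ ![d, e₁])) ∧
    (∀ j, j ≤ G.My → ζ 1 = G.y j →
      ∃ d, HasDerivWithinAt (fun t => φ (pt t (G.y j))) d (Icc (-1:ℝ) 1) (ζ 0) ∧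
        (∀ n, (φ ζ) 0 = w n → LinearIndependent ℝ ![d, e₂]) ∧
        (∀ m, (φ ζ) 1 = z m → LinearIndependent ℝ ![d, e₁])))

/-- `f` is piecewise affine on [a,b]. -/
def PiecewiseAffineOn (f : ℝ → R2) (a b : ℝ) : Prop :=
  ∃ (N : ℕ) (t : ℕ → ℝ), t 0 = a ∧ t N = b ∧ (∀ n < N, t n < t (n+1)) ∧
    ∀ n < N, ∃ c d : R2, ∀ s ∈ Icc (t n) (t (n+1)), f s = c + s • d

/-- `f` is piecewise affine on each segment of the grid `G`. -/
def GridPiecewiseAffine (G : GridData) (f : R2 → R2) : Prop :=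
  (∀ i ≤ G.Mx, PiecewiseAffineOn (fun t => f (pt (G.x i) t)) (-1) 1) ∧
  (∀ j ≤ G.My, PiecewiseAffineOn (fun t => f (pt t (G.y j))) (-1) 1)

open Classical in
/-- The tangential derivative of `f` along the grid `G` at a point `ζ` of the grid. -/
def gridTangDeriv (G : GridData) (f : R2 → R2) (ζ : R2) : R2 :=
  if ∃ i ≤ G.Mx, ζ 0 = G.x i then deriv (fun t => f (pt (ζ 0) t)) (ζ 1)
  else deriv (fun t => f (pt t (ζ 1))) (ζ 0)

/-- ∫_Γ |D_τ f|^p dH¹ over the grid Γ. -/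
def gridEnergy (p : ℝ) (G : GridData) (f : R2 → R2) : ℝ :=
  ∫ ζ in G.carrier, ‖gridTangDeriv G f ζ‖ ^ p ∂μH[1]

/-- A general grid: finitely many Lipschitz injective curves meeting pairwise in at most
one point, transversally, with no triple intersections. -/
def IsGeneralGrid (M : ℕ) (σ : Fin M → ℝ → R2) : Prop :=
  (∀ i, (∃ K : ℝ≥0, LipschitzOnWith K (σ i) unitI) ∧ InjOn (σ i) unitI) ∧
  (∀ i j, i ≠ j → (σ i '' unitI ∩ σ j '' unitI).Subsingleton) ∧
  (∀ i j, i ≠ j → ∀ t ∈ unitI, ∀ s ∈ unitI, σ i t = σ j s →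
    ∃ di dj, HasDerivWithinAt (σ i) di unitI t ∧ HasDerivWithinAt (σ j) dj unitI s ∧
      LinearIndependent ℝ ![di, dj]) ∧
  (∀ i j n, i ≠ j → j ≠ n → i ≠ n → σ i '' unitI ∩ σ j '' unitI ∩ σ n '' unitI = ∅)

/-- Membership of φ in W^{1,p}(Γ,ℝ²) for Γ the union of the curves σ_i, witnessed by a
tangential (arclength) derivative function Dφ: along each curve, φ∘σ_i is absolutely
continuous with derivative |σ_i'(t)| • Dφ(σ_i(t)), and |Dφ|^p is H¹-integrable on Γ. -/
def MemW1pCurveGridWith (p : ℝ) (M : ℕ) (σ : Fin M → ℝ → R2) (φ Dφ : R2 → R2) : Prop :=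
  (∀ i, ∃ g : ℝ → R2, IsACDerivOn (fun t => φ (σ i t)) g 0 1 ∧
    ∀ᵐ t ∂(volume.restrict unitI), g t = ‖deriv (σ i) t‖ • Dφ (σ i t)) ∧
  IntegrableOn (fun ζ => ‖Dφ ζ‖ ^ p) (⋃ i, σ i '' unitI) μH[1]

/-- The closed square Q̃_r: the convex hull of (r,0), (−r,0), (0,r), (0,−r). -/
def diamond (r : ℝ) : Set R2 := {z | |z 0| + |z 1| ≤ r}

/-- The boundary ∂Q̃_r. -/
def diamondBdry (r : ℝ) : Set R2 := {z | |z 0| + |z 1| = r}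

/-- A constant-speed (speed r√2) parametrization of the closed curve ∂Q̃_r over [0,4]. -/
def diamondParam (r : ℝ) (t : ℝ) : R2 :=
  if t ≤ 1 then pt (r*(1-t)) (r*t)
  else if t ≤ 2 then pt (r*(1-t)) (r*(2-t))
  else if t ≤ 3 then pt (r*(t-3)) (r*(2-t))
  else pt (r*(t-3)) (r*(t-4))

/-- `h` is finitely piecewise affine on `S`: `S` is a finite union of triangles on each
of which `h` is affine. -/
def FinitelyPWAffineOn (h : R2 → R2) (S : Set R2) : Prop :=
  ∃ (n : ℕ) (T : Fin n → (Fin 3 → R2)),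
    S = ⋃ i, convexHull ℝ (Set.range (T i)) ∧
    ∀ i, ∃ (A : R2 →L[ℝ] R2) (b : R2), ∀ z ∈ convexHull ℝ (Set.range (T i)), h z = A z + b

/-- The tangent direction of the circle centered at `c` at a point `q`:
the rotation by 90° of `q − c`. -/
def circleTangent (c q : R2) : R2 := pt (-(q 1 - c 1)) (q 0 - c 0)


lemma linIndep_of_fst {d : R2} (hd : d 0 ≠ 0) : LinearIndependent ℝ ![d, e₂] := by
  rw [LinearIndependent.pair_iff]
  intro s t h
  have h0 : s * d 0 + t * e₂ 0 = 0 := congrFun (congrArg (WithLp.equiv 2 (Fin 2 → ℝ)) h) 0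
  have h1 : s * d 1 + t * e₂ 1 = 0 := congrFun (congrArg (WithLp.equiv 2 (Fin 2 → ℝ)) h) 1
  have he0 : e₂ 0 = 0 := rfl
  have he1 : e₂ 1 = 1 := rfl
  rw [he0] at h0; rw [he1] at h1
  have hs : s = 0 := by
    rcases (by simpa using h0 : s = 0 ∨ d 0 = 0) with h | h
    · exact h
    · exact absurd h hd
  refine ⟨hs, by simpa [hs] using h1⟩

lemma linIndep_of_snd {d : R2} (hd : d 1 ≠ 0) : LinearIndependent ℝ ![d, e₁] := by
  rw [LinearIndependent.pair_iff]
  intro s t h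
  have h0 : s * d 0 + t * e₁ 0 = 0 := congrFun (congrArg (WithLp.equiv 2 (Fin 2 → ℝ)) h) 0
  have h1 : s * d 1 + t * e₁ 1 = 0 := congrFun (congrArg (WithLp.equiv 2 (Fin 2 → ℝ)) h) 1
  have he0 : e₁ 0 = 1 := rfl
  have he1 : e₁ 1 = 0 := rfl
  rw [he0] at h0; rw [he1] at h1
  have hs : s = 0 := by
    rcases (by simpa using h1 : s = 0 ∨ d 1 = 0) with h | h
    · exact h
    · exact absurd h hd
  refine ⟨hs, by simpa [hs] using h0⟩

namespace AGAux

lemma abs_coord_le_norm (z : R2) (κ : Fin 2) : |z κ| ≤ ‖z‖ := by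
  rw [EuclideanSpace.norm_eq]
  have h1 : |z κ| = Real.sqrt (‖z κ‖ ^ 2) := by
    rw [Real.sqrt_sq_eq_abs, Real.norm_eq_abs, abs_abs]
  rw [h1]
  refine Real.sqrt_le_sqrt ?_
  exact Finset.single_le_sum (f := fun i => ‖z i‖ ^ 2) (fun i _ => by positivity)
    (Finset.mem_univ κ)

/-- Luzin (N) property for a function with modulus controlled by a finite measure
absolutely continuous w.r.t. Lebesgue. -/
lemma luzinN {a b : ℝ} {f : ℝ → ℝ} {ν : Measure ℝ} [IsFiniteMeasure ν]
    (hν : ν ≪ volume)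
    (hf : ∀ x ∈ Icc a b, ∀ y ∈ Icc a b, x ≤ y →
      ENNReal.ofReal |f y - f x| ≤ ν (Icc x y))
    {N : Set ℝ} (hN : N ⊆ Icc a b) (hN0 : volume N = 0) :
    volume (f '' N) = 0 := by
  have hνN : ν N = 0 := hν hN0
  -- it suffices to show volume (f '' N) ≤ ε for every ε > 0
  refine le_antisymm (le_of_forall_gt fun ε hε => ?_) (zero_le)
  obtain ⟨U, hNU, hUopen, hUε⟩ := exists_isOpen_lt_of_lt N ε (hνN ▸ hε)
  -- the collection of connected components of U, indexed by rationals
  set 𝒞 : Set (Set ℝ) := range (fun q : ℚ => connectedComponentIn U (q : ℝ)) with h𝒞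
  have h𝒞count : 𝒞.Countable := countable_range _
  have hUsub : U ⊆ ⋃ C ∈ 𝒞, C := by
    intro x hx
    obtain ⟨q, hq⟩ := Rat.denseRange_cast.exists_mem_open (hUopen.connectedComponentIn)
      ⟨x, mem_connectedComponentIn hx⟩
    have : connectedComponentIn U (q : ℝ) = connectedComponentIn U x :=
      (connectedComponentIn_eq hq).symm
    exact mem_biUnion (mem_range_self q) (this ▸ mem_connectedComponentIn hx)
  have hdiam : ∀ C ∈ 𝒞, volume (f '' (N ∩ C)) ≤ ν C := by
    rintro C ⟨q, rfl⟩
    set C := connectedComponentIn U (q : ℝ)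
    refine (Real.volume_le_diam _).trans ?_
    refine EMetric.diam_le ?_
    rintro _ ⟨x, hx, rfl⟩ _ ⟨y, hy, rfl⟩
    have hord : OrdConnected C :=
      (isPreconnected_connectedComponentIn).ordConnected
    wlog hxy : x ≤ y generalizing x y
    · rw [edist_comm]; exact this y hy x hx (le_of_not_ge hxy)
    have hIcc : Icc x y ⊆ C := hord.out hx.2 hy.2
    calc edist (f x) (f y) = ENNReal.ofReal |f y - f x| := by
          rw [edist_dist, Real.dist_eq, abs_sub_comm]
      _ ≤ ν (Icc x y) := hf x (hN hx.1) y (hN hy.1) hxy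
      _ ≤ ν C := measure_mono hIcc
  have hdisj : 𝒞.PairwiseDisjoint (fun C => C) := by
    rintro _ ⟨q, rfl⟩ _ ⟨q', rfl⟩ hne
    refine disjoint_left.2 fun x hx hx' => hne ?_
    have hx2 : x ∈ connectedComponentIn U (q : ℝ) := hx
    have hx2' : x ∈ connectedComponentIn U (q' : ℝ) := hx'
    show connectedComponentIn U (q : ℝ) = connectedComponentIn U (q' : ℝ)
    rw [connectedComponentIn_eq hx2, connectedComponentIn_eq hx2']
  have hmeas : ∀ C ∈ 𝒞, MeasurableSet C := by
    rintro _ ⟨q, rfl⟩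
    exact (hUopen.connectedComponentIn).measurableSet
  calc volume (f '' N) ≤ volume (⋃ C ∈ 𝒞, f '' (N ∩ C)) := by
        refine measure_mono ?_
        rintro _ ⟨x, hx, rfl⟩
        obtain ⟨C, hC, hxC⟩ := mem_iUnion₂.1 (hUsub (hNU hx))
        exact mem_iUnion₂.2 ⟨C, hC, ⟨x, ⟨hx, hxC⟩, rfl⟩⟩
    _ ≤ ∑' C : 𝒞, volume (f '' (N ∩ C)) := measure_biUnion_le _ h𝒞count _
    _ ≤ ∑' C : 𝒞, ν C := ENNReal.tsum_le_tsum fun C => hdiam C C.2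
    _ = ν (⋃ C ∈ 𝒞, C) := (measure_biUnion h𝒞count hdisj hmeas).symm
    _ ≤ ν U := measure_mono (iUnion₂_subset fun C hC => by
          obtain ⟨q, rfl⟩ := hC; exact connectedComponentIn_subset U _)
    _ < ε := hUε

/-- Lebesgue differentiation: a.e. differentiability of the primitive of an
integrable function. -/
lemma ae_hasDerivAt_primitive {E : Type*} [NormedAddCommGroup E] [NormedSpace ℝ E]
    [CompleteSpace E] {g : ℝ → E} (hg : Integrable g volume) (a : ℝ) :
    ∀ᵐ x ∂(volume : Measure ℝ), HasDerivAt (fun t => ∫ s in a..t, g s) (g x) x := by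
  filter_upwards [IsUnifLocDoublingMeasure.ae_tendsto_average_norm_sub
    (volume : Measure ℝ) hg.locallyIntegrable 1] with x hx
  have hδ : Tendsto (fun y : ℝ => dist y x) (𝓝[≠] x) (𝓝[>] 0) := by
    rw [tendsto_nhdsWithin_iff]
    constructor
    · exact tendsto_nhdsWithin_of_tendsto_nhds
        ((continuous_id.dist continuous_const).tendsto' x 0 (by simp))
    · filter_upwards [self_mem_nhdsWithin] with y hy
      exact dist_pos.2 hy
  have hball : ∀ᶠ y : ℝ in 𝓝[≠] x, x ∈ Metric.closedBall ((fun _ => x) y) (1 * dist y x) := by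
    filter_upwards with y
    simpa using mul_nonneg zero_le_one dist_nonneg
  have H : Tendsto (fun y : ℝ => ⨍ t in Metric.closedBall x (dist y x), ‖g t - g x‖)
      (𝓝[≠] x) (𝓝 0) := hx (fun _ => x) (fun y => dist y x) hδ hball
  rw [hasDerivAt_iff_tendsto]
  -- reduce to the punctured neighborhood filter
  have hsplit : 𝓝 x = 𝓝[≠] x ⊔ pure x := (nhdsNE_sup_pure x).symm
  rw [hsplit, tendsto_sup]
  constructor
  · -- the main estimate
    have hbound : ∀ y : ℝ, y ≠ x →
        ‖y - x‖⁻¹ * ‖(∫ s in a..y, g s) - (∫ s in a..x, g s) - (y - x) • g x‖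
          ≤ 2 * ⨍ t in Metric.closedBall x (dist y x), ‖g t - g x‖ := by
      intro y hy
      have hint : ∀ u v : ℝ, IntervalIntegrable g volume u v := fun u v =>
        hg.intervalIntegrable
      have e1 : (∫ s in a..y, g s) - (∫ s in a..x, g s) = ∫ s in x..y, g s :=
        intervalIntegral.integral_interval_sub_left (hint a y) (hint a x)
      have e2 : (y - x) • g x = ∫ _ in x..y, g x := by
        rw [intervalIntegral.integral_const]
      have e3 : (∫ s in x..y, g s) - (∫ _ in x..y, g x) = ∫ s in x..y, (g s - g x) := by
        rw [intervalIntegral.integral_sub (hint x y) intervalIntegrable_const]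
      rw [e1, e2, e3]
      have hsub : uIoc x y ⊆ Metric.closedBall x (dist y x) := by
        intro t ht
        rcases le_total x y with hxy | hxy
        · rw [uIoc_of_le hxy] at ht
          rw [Metric.mem_closedBall, Real.dist_eq, Real.dist_eq]
          rw [abs_of_nonneg (by linarith [ht.1.le, ht.2] : (0:ℝ) ≤ t - x),
            abs_of_nonneg (by linarith : (0:ℝ) ≤ y - x)]
          linarith [ht.2]
        · rw [uIoc_of_ge hxy] at ht
          rw [Metric.mem_closedBall, Real.dist_eq, Real.dist_eq]
          rw [abs_of_nonpos (by linarith [ht.2] : t - x ≤ 0),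
            abs_of_nonpos (by linarith : y - x ≤ 0)]
          linarith [ht.1.le]
      have hIntBall : IntegrableOn (fun t => ‖g t - g x‖) (Metric.closedBall x (dist y x)) :=
        ((hg.integrableOn.sub (integrableOn_const measure_closedBall_lt_top.ne)).norm)
      have step1 : ‖∫ s in x..y, (g s - g x)‖ ≤ ∫ t in uIoc x y, ‖g t - g x‖ :=
        intervalIntegral.norm_integral_le_integral_norm_uIoc
      have step2 : ∫ t in uIoc x y, ‖g t - g x‖ ≤
          ∫ t in Metric.closedBall x (dist y x), ‖g t - g x‖ := by
        refine setIntegral_mono_set hIntBall ?_ (HasSubset.Subset.eventuallyLE hsub)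
        filter_upwards with t using norm_nonneg _
      have hvol : volume.real (Metric.closedBall x (dist y x)) = 2 * dist y x := by
        rw [Real.volume_real_closedBall (by positivity)]
      have step3 : ∫ t in Metric.closedBall x (dist y x), ‖g t - g x‖ =
          (2 * dist y x) * ⨍ t in Metric.closedBall x (dist y x), ‖g t - g x‖ := by
        rw [setAverage_eq, hvol]
        rw [smul_eq_mul, ← mul_assoc, mul_inv_cancel₀ (by
          have : 0 < dist y x := dist_pos.2 hy
          positivity), one_mul]
      have hnorm : ‖y - x‖⁻¹ = (dist y x)⁻¹ := by rw [Real.norm_eq_abs, Real.dist_eq]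
      calc ‖y - x‖⁻¹ * ‖∫ s in x..y, (g s - g x)‖
          ≤ ‖y - x‖⁻¹ * ((2 * dist y x) * ⨍ t in Metric.closedBall x (dist y x), ‖g t - g x‖) := by
            refine mul_le_mul_of_nonneg_left ?_ (by positivity)
            exact step1.trans (step2.trans_eq step3)
        _ = 2 * ⨍ t in Metric.closedBall x (dist y x), ‖g t - g x‖ := by
            rw [hnorm]
            have h0 : dist y x ≠ 0 := (dist_pos.2 hy).ne'
            field_simp
    refine squeeze_zero' ?_ ?_ (by simpa using H.const_mul 2)
    · filter_upwards with y using by positivity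
    · filter_upwards [self_mem_nhdsWithin] with y hy using hbound y hy
  · -- at the point x itself the quantity is 0
    refine tendsto_pure_left.2 fun s hs => ?_
    simpa using mem_of_mem_nhds hs

/-- Parameters in `Icc (-1) 1` where the curve `F` has no derivative with nonvanishing
κ-th coordinate. -/
def badParam (κ : Fin 2) (F : ℝ → R2) : Set ℝ :=
  {t ∈ Icc (-1:ℝ) 1 | ¬ ∃ d : R2, HasDerivWithinAt F d (Icc (-1:ℝ) 1) t ∧ d κ ≠ 0}

/-- The set of bad values of the κ-th coordinate of `F`. -/
def levelBad (κ : Fin 2) (F : ℝ → R2) : Set ℝ := (fun t => F t κ) '' badParam κ F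

lemma volume_levelBad {F g : ℝ → R2} (h : IsACDerivOn F g (-1) 1) (κ : Fin 2) :
    volume (levelBad κ F) = 0 := by
  obtain ⟨hgint, hrep0⟩ := h
  set G' : ℝ → R2 := (Icc (-1:ℝ) 1).indicator g with hG'
  have hG'i : Integrable G' volume := (integrable_indicator_iff measurableSet_Icc).2 hgint
  have hG'int : ∀ u v : ℝ, IntervalIntegrable G' volume u v := fun u v =>
    hG'i.intervalIntegrable
  have hrep : ∀ t ∈ Icc (-1:ℝ) 1, F t = F (-1) + ∫ s in (-1:ℝ)..t, G' s := by
    intro t ht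
    rw [hrep0 t ht]
    congr 1
    refine intervalIntegral.integral_congr fun s hs => ?_
    rw [uIcc_of_le ht.1] at hs
    exact (indicator_of_mem (Icc_subset_Icc le_rfl ht.2 hs) g).symm
  -- difference formula
  have hdiff : ∀ x ∈ Icc (-1:ℝ) 1, ∀ y ∈ Icc (-1:ℝ) 1,
      F y - F x = ∫ s in x..y, G' s := by
    intro x hx y hy
    rw [hrep x hx, hrep y hy]
    have : F (-1) + (∫ s in (-1:ℝ)..y, G' s) - (F (-1) + ∫ s in (-1:ℝ)..x, G' s)
        = (∫ s in (-1:ℝ)..y, G' s) - ∫ s in (-1:ℝ)..x, G' s := by abel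
    rw [this, intervalIntegral.integral_interval_sub_left (hG'int _ _) (hG'int _ _)]
  -- the controlling measure
  have hGm := hG'i.aestronglyMeasurable
  set Gm : ℝ → R2 := hGm.mk G' with hGmdef
  have hGmmeas : Measurable fun t => ENNReal.ofReal ‖Gm t‖ :=
    (hGm.stronglyMeasurable_mk.norm.measurable).ennreal_ofReal
  have hGeq : G' =ᵐ[volume] Gm := hGm.ae_eq_mk
  set ν : Measure ℝ := volume.withDensity (fun t => ENNReal.ofReal ‖Gm t‖) with hν
  have hνvol : ν ≪ volume := withDensity_absolutelyContinuous _ _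
  have hνfin : IsFiniteMeasure ν := by
    constructor
    rw [hν, withDensity_apply _ MeasurableSet.univ, setLIntegral_univ]
    have hcongr : (fun x => ENNReal.ofReal ‖Gm x‖) =ᵐ[volume] fun x => ENNReal.ofReal ‖G' x‖ :=
      hGeq.mono fun x hx => by dsimp only; rw [hx]
    rw [lintegral_congr_ae hcongr]
    exact hG'i.norm.lintegral_lt_top
  -- the modulus bound for the κ-th coordinate
  have hmod : ∀ x ∈ Icc (-1:ℝ) 1, ∀ y ∈ Icc (-1:ℝ) 1, x ≤ y →
      ENNReal.ofReal |F y κ - F x κ| ≤ ν (Icc x y) := by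
    intro x hx y hy hxy
    have h1 : |F y κ - F x κ| ≤ ‖F y - F x‖ := by
      have : F y κ - F x κ = (F y - F x) κ := rfl
      rw [this]
      exact abs_coord_le_norm _ _
    have h2 : ‖F y - F x‖ ≤ ∫ s in Ioc x y, ‖G' s‖ := by
      rw [hdiff x hx y hy]
      refine intervalIntegral.norm_integral_le_integral_norm_uIoc.trans_eq ?_
      rw [uIoc_of_le hxy]
    have h3 : ENNReal.ofReal (∫ s in Ioc x y, ‖G' s‖) = ∫⁻ s in Ioc x y, ENNReal.ofReal ‖G' s‖ := by
      refine ofReal_integral_eq_lintegral_ofReal (hG'i.norm.integrableOn) ?_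
      filter_upwards with s using norm_nonneg _
    have h4 : (∫⁻ s in Ioc x y, ENNReal.ofReal ‖G' s‖) = ∫⁻ s in Ioc x y, ENNReal.ofReal ‖Gm s‖ :=
      lintegral_congr_ae (ae_restrict_of_ae (hGeq.mono fun s hs => by dsimp only; rw [hs]))
    calc ENNReal.ofReal |F y κ - F x κ| ≤ ENNReal.ofReal (∫ s in Ioc x y, ‖G' s‖) :=
          ENNReal.ofReal_le_ofReal (h1.trans h2)
      _ = ∫⁻ s in Ioc x y, ENNReal.ofReal ‖Gm s‖ := by rw [h3, h4]
      _ = ν (Ioc x y) := (withDensity_apply _ measurableSet_Ioc).symm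
      _ ≤ ν (Icc x y) := measure_mono Ioc_subset_Icc_self
  -- decomposition of the bad parameter set
  have hD := ae_hasDerivAt_primitive hG'i (-1)
  set Nd : Set ℝ := {t | ¬ HasDerivAt (fun u => ∫ s in (-1:ℝ)..u, G' s) (G' t) t} with hNd
  have hNd0 : volume Nd = 0 := by
    rw [← ae_iff] at *
    exact hD
  set C : Set ℝ := {t ∈ Icc (-1:ℝ) 1 |
      HasDerivWithinAt (fun u => F u κ) 0 (Icc (-1:ℝ) 1) t} with hC
  have hsplit : badParam κ F ⊆ ({-1, 1} : Set ℝ) ∪ (badParam κ F ∩ Nd) ∪ C := by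
    intro t ht
    obtain ⟨htI, htbad⟩ := ht
    by_cases hend : t = -1 ∨ t = 1
    · left; left
      rcases hend with h | h <;> simp [h]
    push_neg at hend
    have htO : t ∈ Ioo (-1:ℝ) 1 :=
      ⟨lt_of_le_of_ne htI.1 (Ne.symm hend.1), lt_of_le_of_ne htI.2 hend.2⟩
    by_cases htd : t ∈ Nd
    · left; right; exact ⟨⟨htI, htbad⟩, htd⟩
    right
    -- t is a differentiability point
    have hd : HasDerivAt (fun u => ∫ s in (-1:ℝ)..u, G' s) (G' t) t := not_not.1 htd
    have hdF : HasDerivAt F (G' t) t := by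
      refine HasDerivAt.congr_of_eventuallyEq (hd.const_add (F (-1))) ?_
      filter_upwards [Icc_mem_nhds htO.1 htO.2] with u hu using hrep u hu
    have hdFW : HasDerivWithinAt F (G' t) (Icc (-1:ℝ) 1) t := hdF.hasDerivWithinAt
    have hκ : (G' t) κ = 0 := by
      by_contra hne
      exact htbad ⟨G' t, hdFW, hne⟩
    have hproj := ((EuclideanSpace.proj κ (𝕜 := ℝ)).hasFDerivAt (x := F t)).comp_hasDerivWithinAt
      t hdFW
    have : HasDerivWithinAt (fun u => F u κ) ((G' t) κ) (Icc (-1:ℝ) 1) t := hproj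
    rw [hκ] at this
    exact ⟨htI, this⟩
  -- images of the three pieces are null
  haveI := hνfin
  have himg1 : volume ((fun t => F t κ) '' ({-1, 1} : Set ℝ)) = 0 :=
    (Set.Finite.image _ (by simp : ({-1,1} : Set ℝ).Finite)).measure_zero _
  have himg2 : volume ((fun t => F t κ) '' (badParam κ F ∩ Nd)) = 0 := by
    refine luzinN (ν := ν) hνvol hmod (fun t ht => ht.1.1) ?_
    exact measure_mono_null inter_subset_right hNd0
  have himg3 : volume ((fun t => F t κ) '' C) = 0 := by
    refine addHaar_image_eq_zero_of_det_fderivWithin_eq_zero volume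
      (f' := fun _ => (0 : ℝ →L[ℝ] ℝ)) (fun x hx => ?_) (fun x hx => ?_)
    · have hsub : C ⊆ Icc (-1:ℝ) 1 := sep_subset _ _
      have h0 : ContinuousLinearMap.smulRight (1 : ℝ →L[ℝ] ℝ) (0 : ℝ) = 0 := by
        ext u; simp
      rw [← h0]
      exact (hx.2.mono hsub).hasFDerivWithinAt
    · simp [ContinuousLinearMap.det]
  refine measure_mono_null (image_mono hsplit) ?_
  rw [image_union, image_union]
  exact measure_union_null (measure_union_null himg1 himg2) himg3

lemma continuousOn_of_ACDeriv {F g : ℝ → R2} (h : IsACDerivOn F g (-1) 1) :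
    ContinuousOn F (Icc (-1:ℝ) 1) := by
  obtain ⟨hgint, hrep⟩ := h
  have hc : ContinuousOn (fun t => F (-1) + ∫ s in Ioc (-1:ℝ) t, g s) (Icc (-1:ℝ) 1) :=
    continuousOn_const.add (intervalIntegral.continuousOn_primitive hgint)
  refine hc.congr fun t ht => ?_
  rw [hrep t ht, intervalIntegral.integral_of_le ht.1]

lemma goodVal_spec {F : ℝ → R2} (κ : Fin 2) {c : ℝ} (hc : c ∉ levelBad κ F) :
    ∀ t ∈ Icc (-1:ℝ) 1, F t κ = c →
      ∃ d : R2, HasDerivWithinAt F d (Icc (-1:ℝ) 1) t ∧ d κ ≠ 0 := by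
  intro t ht htc
  by_contra hno
  exact hc ⟨t, ⟨ht, hno⟩, htc⟩

lemma levelSet_finite {F g : ℝ → R2} (h : IsACDerivOn F g (-1) 1) (κ : Fin 2) {c : ℝ}
    (hc : c ∉ levelBad κ F) : {t ∈ Icc (-1:ℝ) 1 | F t κ = c}.Finite := by
  by_contra hinf
  replace hinf : {t ∈ Icc (-1:ℝ) 1 | F t κ = c}.Infinite := hinf
  set L := {t ∈ Icc (-1:ℝ) 1 | F t κ = c} with hL
  have u0 : ℕ ↪ L := hinf.natEmbedding _
  set u : ℕ → ℝ := fun n => (u0 n : ℝ) with hu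
  have huL : ∀ n, u n ∈ L := fun n => (u0 n).2
  obtain ⟨x, hxI, ψ, hψ, hconv⟩ := (isCompact_Icc (a := (-1:ℝ)) (b := 1)).tendsto_subseq
    (fun n => (huL n).1)
  have huinj : Function.Injective u := fun m n hmn => u0.injective (Subtype.ext hmn)
  have hne : ∀ᶠ n in atTop, u (ψ n) ≠ x := by
    have hfin : {n | u (ψ n) = x}.Finite := by
      refine Set.Subsingleton.finite fun m hm n hn => ?_
      exact hψ.injective (huinj (hm.trans hn.symm))
    rw [← Nat.cofinite_eq_atTop]
    exact hfin.eventually_cofinite_notMem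
  have hcont := continuousOn_of_ACDeriv h
  have hcκ : ContinuousOn (fun t => F t κ) (Icc (-1:ℝ) 1) :=
    (EuclideanSpace.proj κ (𝕜 := ℝ)).continuous.comp_continuousOn hcont
  have hseqI : Tendsto (fun n => u (ψ n)) atTop (𝓝[Icc (-1:ℝ) 1] x) := by
    rw [tendsto_nhdsWithin_iff]
    exact ⟨hconv, Eventually.of_forall fun n => (huL (ψ n)).1⟩
  have hxc : F x κ = c := by
    have h1 : Tendsto (fun n => F (u (ψ n)) κ) atTop (𝓝 (F x κ)) :=
      ((hcκ x hxI).tendsto).comp hseqI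
    have h2 : (fun n => F (u (ψ n)) κ) = fun _ => c := funext fun n => (huL (ψ n)).2
    rw [h2] at h1
    exact (tendsto_nhds_unique tendsto_const_nhds h1).symm
  obtain ⟨d, hd, hdκ⟩ := goodVal_spec κ hc x hxI hxc
  have hdκ' : HasDerivWithinAt (fun t => F t κ) (d κ) (Icc (-1:ℝ) 1) x :=
    ((EuclideanSpace.proj κ (𝕜 := ℝ)).hasFDerivAt (x := F x)).comp_hasDerivWithinAt x hd
  rw [hasDerivWithinAt_iff_tendsto_slope] at hdκ'
  have hseq' : Tendsto (fun n => u (ψ n)) atTop (𝓝[Icc (-1:ℝ) 1 \ {x}] x) := by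
    rw [tendsto_nhdsWithin_iff]
    refine ⟨hconv, ?_⟩
    filter_upwards [hne] with n hn
    exact ⟨(huL (ψ n)).1, hn⟩
  have hslope : Tendsto (fun n => slope (fun t => F t κ) x (u (ψ n))) atTop (𝓝 (d κ)) :=
    hdκ'.comp hseq'
  have hzero : ∀ᶠ n in atTop, slope (fun t => F t κ) x (u (ψ n)) = 0 := by
    filter_upwards [hne] with n hn
    rw [slope_def_field, hxc, (huL (ψ n)).2, sub_self, zero_div]
  have : d κ = 0 :=
    tendsto_nhds_unique (hslope.congr' hzero) tendsto_const_nhds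
  exact hdκ this

lemma mono_of_gaps {f : ℕ → ℝ} {N : ℕ} (h : ∀ i < N, f i < f (i+1)) :
    ∀ {i j : ℕ}, i ≤ j → j ≤ N → f i ≤ f j := by
  intro i j hij hjN
  induction hij with
  | refl => exact le_rfl
  | @step m hm ih =>
      exact (ih (le_trans (Nat.le_succ m) hjN)).trans
        (h m (Nat.lt_of_succ_le hjN)).le

end AGAux

/-- The vertical segment curves of the grid under φ. -/
def AGAux.vseg (φ : R2 → R2) (G : GridData) (i : ℕ) : ℝ → R2 := fun t => φ (pt (G.x i) t)

/-- The horizontal segment curves of the grid under φ. -/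
def AGAux.hseg (φ : R2 → R2) (G : GridData) (j : ℕ) : ℝ → R2 := fun t => φ (pt t (G.y j))

/-- for a.e. choices of M vertical and M horizontal lines, the resulting
grid is a good arrival grid for φ ∈ W^{1,p}(Γ_k,ℝ²). -/
theorem ae_good_arrival_grid
    (p : ℝ) (hp : 1 ≤ p) (k : ℕ) (G : GridData) (hG : G.IsKGrid k)
    (φ : R2 → R2) (hφ : MemW1pGrid p G φ) (M : ℕ) :
    ∀ᵐ w ∂(volume : Measure (Fin M → ℝ)), ∀ᵐ z ∂(volume : Measure (Fin M → ℝ)),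
      IsGoodArrivalGrid G φ M w z := by
  classical
  obtain ⟨dv, dh, hWv, hWh⟩ := hφ
  have hACv : ∀ i ≤ G.Mx, IsACDerivOn (AGAux.vseg φ G i) (dv i) (-1) 1 :=
    fun i hi => (hWv i hi).1
  have hACh : ∀ j ≤ G.My, IsACDerivOn (AGAux.hseg φ G j) (dh j) (-1) 1 :=
    fun j hj => (hWh j hj).1
  obtain ⟨hx0, hxM, hy0, hyM, hgx, hgy⟩ := hG
  have h2pos : (0:ℝ) < 2^(-(k:ℤ)) := by positivity
  have hxlt : ∀ i < G.Mx, G.x i < G.x (i+1) := fun i hi => by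
    have := (hgx i hi).1; linarith
  have hylt : ∀ j < G.My, G.y j < G.y (j+1) := fun j hj => by
    have := (hgy j hj).1; linarith
  have hxm : ∀ i ≤ G.Mx, G.x i ∈ Icc (-1:ℝ) 1 := fun i hi =>
    ⟨hx0 ▸ AGAux.mono_of_gaps hxlt (Nat.zero_le i) hi,
     hxM ▸ AGAux.mono_of_gaps hxlt hi le_rfl⟩
  have hym : ∀ j ≤ G.My, G.y j ∈ Icc (-1:ℝ) 1 := fun j hj =>
    ⟨hy0 ▸ AGAux.mono_of_gaps hylt (Nat.zero_le j) hj,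
     hyM ▸ AGAux.mono_of_gaps hylt hj le_rfl⟩
  have hpt : ∀ ζ : R2, pt (ζ 0) (ζ 1) = ζ := fun ζ => by
    ext i; fin_cases i <;> rfl
  -- crossing points of the grid
  set Cross : Set R2 := image2 (fun i j => pt (G.x i) (G.y j)) (Iic G.Mx) (Iic G.My)
    with hCross
  have hCrossFin : Cross.Finite := (Set.finite_Iic _).image2 _ (Set.finite_Iic _)
  -- bad value sets
  set Bad0 : Set ℝ :=
    ((⋃ i ∈ Iic G.Mx, AGAux.levelBad 0 (AGAux.vseg φ G i)) ∪
      ⋃ j ∈ Iic G.My, AGAux.levelBad 0 (AGAux.hseg φ G j)) ∪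
    (fun ζ => φ ζ 0) '' Cross with hBad0def
  set Bad1 : Set ℝ :=
    ((⋃ i ∈ Iic G.Mx, AGAux.levelBad 1 (AGAux.vseg φ G i)) ∪
      ⋃ j ∈ Iic G.My, AGAux.levelBad 1 (AGAux.hseg φ G j)) ∪
    (fun ζ => φ ζ 1) '' Cross with hBad1def
  have hBad0 : volume Bad0 = 0 := by
    refine measure_union_null (measure_union_null ?_ ?_) ((hCrossFin.image _).measure_zero _)
    · exact (measure_biUnion_null_iff (to_countable _)).2
        fun i hi => AGAux.volume_levelBad (hACv i hi) 0
    · exact (measure_biUnion_null_iff (to_countable _)).2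
        fun j hj => AGAux.volume_levelBad (hACh j hj) 0
  have hBad1 : volume Bad1 = 0 := by
    refine measure_union_null (measure_union_null ?_ ?_) ((hCrossFin.image _).measure_zero _)
    · exact (measure_biUnion_null_iff (to_countable _)).2
        fun i hi => AGAux.volume_levelBad (hACv i hi) 1
    · exact (measure_biUnion_null_iff (to_countable _)).2
        fun j hj => AGAux.volume_levelBad (hACh j hj) 1
  -- a.e. w avoids Bad0
  have hpiav : ∀ (B : Set ℝ), volume B = 0 →
      ∀ᵐ v : Fin M → ℝ ∂volume, ∀ n : Fin M, v n ∉ B := by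
    intro B hB
    rw [ae_iff]
    refine measure_mono_null (fun v hv => ?_) (measure_iUnion_null
      (fun n : Fin M => ?_) : volume (⋃ n : Fin M, Function.eval n ⁻¹' B) = 0)
    · simp only [mem_setOf_eq] at hv
      push_neg at hv
      obtain ⟨n, hn⟩ := hv
      exact mem_iUnion.2 ⟨n, hn⟩
    · rw [volume_pi]
      exact Measure.pi_eval_preimage_null _ hB
  filter_upwards [hpiav Bad0 hBad0] with w hw
  -- components of the w-avoidance
  have hwv : ∀ i ≤ G.Mx, ∀ n, w n ∉ AGAux.levelBad 0 (AGAux.vseg φ G i) :=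
    fun i hi n h => hw n (Or.inl (Or.inl (mem_biUnion hi h)))
  have hwh : ∀ j ≤ G.My, ∀ n, w n ∉ AGAux.levelBad 0 (AGAux.hseg φ G j) :=
    fun j hj n h => hw n (Or.inl (Or.inr (mem_biUnion hj h)))
  have hwc : ∀ n, ∀ ζ ∈ Cross, φ ζ 0 ≠ w n :=
    fun n ζ hζ h => hw n (Or.inr ⟨ζ, hζ, h⟩)
  -- finite level sets for w
  have hLv : ∀ i ≤ G.Mx, ∀ n, {t ∈ Icc (-1:ℝ) 1 | AGAux.vseg φ G i t 0 = w n}.Finite :=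
    fun i hi n => AGAux.levelSet_finite (hACv i hi) 0 (hwv i hi n)
  have hLh : ∀ j ≤ G.My, ∀ n, {t ∈ Icc (-1:ℝ) 1 | AGAux.hseg φ G j t 0 = w n}.Finite :=
    fun j hj n => AGAux.levelSet_finite (hACh j hj) 0 (hwh j hj n)
  -- second coordinates of w-preimages
  set A1 : Set ℝ :=
    (⋃ i ∈ Iic G.Mx, ⋃ n : Fin M,
      (fun t => AGAux.vseg φ G i t 1) '' {t ∈ Icc (-1:ℝ) 1 | AGAux.vseg φ G i t 0 = w n}) ∪
    (⋃ j ∈ Iic G.My, ⋃ n : Fin M,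
      (fun t => AGAux.hseg φ G j t 1) '' {t ∈ Icc (-1:ℝ) 1 | AGAux.hseg φ G j t 0 = w n})
    with hA1def
  have hA1fin : A1.Finite := by
    refine Set.Finite.union ?_ ?_
    · exact Set.Finite.biUnion (Set.finite_Iic _) fun i hi =>
        Set.finite_iUnion fun n => (hLv i hi n).image _
    · exact Set.Finite.biUnion (Set.finite_Iic _) fun j hj =>
        Set.finite_iUnion fun n => (hLh j hj n).image _
  have hBadZ : volume (Bad1 ∪ A1) = 0 :=
    measure_union_null hBad1 (hA1fin.measure_zero _)
  filter_upwards [hpiav (Bad1 ∪ A1) hBadZ] with z hz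
  have hzv : ∀ i ≤ G.Mx, ∀ m, z m ∉ AGAux.levelBad 1 (AGAux.vseg φ G i) :=
    fun i hi m h => hz m (Or.inl (Or.inl (Or.inl (mem_biUnion hi h))))
  have hzh : ∀ j ≤ G.My, ∀ m, z m ∉ AGAux.levelBad 1 (AGAux.hseg φ G j) :=
    fun j hj m h => hz m (Or.inl (Or.inl (Or.inr (mem_biUnion hj h))))
  have hzc : ∀ m, ∀ ζ ∈ Cross, φ ζ 1 ≠ z m :=
    fun m ζ hζ h => hz m (Or.inl (Or.inr ⟨ζ, hζ, h⟩))
  have hzA : ∀ m, z m ∉ A1 := fun m h => hz m (Or.inr h)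
  have hLv1 : ∀ i ≤ G.Mx, ∀ m, {t ∈ Icc (-1:ℝ) 1 | AGAux.vseg φ G i t 1 = z m}.Finite :=
    fun i hi m => AGAux.levelSet_finite (hACv i hi) 1 (hzv i hi m)
  have hLh1 : ∀ j ≤ G.My, ∀ m, {t ∈ Icc (-1:ℝ) 1 | AGAux.hseg φ G j t 1 = z m}.Finite :=
    fun j hj m => AGAux.levelSet_finite (hACh j hj) 1 (hzh j hj m)
  -- carrier decomposition
  have hcar : ∀ ζ ∈ G.carrier,
      (ζ 1 ∈ Icc (-1:ℝ) 1 ∧ ∃ i ≤ G.Mx, ζ 0 = G.x i) ∨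
      (ζ 0 ∈ Icc (-1:ℝ) 1 ∧ ∃ j ≤ G.My, ζ 1 = G.y j) := fun ζ h => h
  -- vertical membership results
  have hvseg_eq : ∀ (i : ℕ) (ζ : R2), ζ 0 = G.x i → AGAux.vseg φ G i (ζ 1) = φ ζ := by
    intro i ζ h0
    show φ (pt (G.x i) (ζ 1)) = φ ζ
    rw [← h0, hpt]
  have hhseg_eq : ∀ (j : ℕ) (ζ : R2), ζ 1 = G.y j → AGAux.hseg φ G j (ζ 0) = φ ζ := by
    intro j ζ h1
    show φ (pt (ζ 0) (G.y j)) = φ ζ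
    rw [← h1, hpt]
  refine ⟨?_, ?_, ?_, ?_⟩
  · -- finiteness of the preimage of the arrival grid
    have hbig : ((⋃ i ∈ Iic G.Mx, (fun t => pt (G.x i) t) ''
        ((⋃ n : Fin M, {t ∈ Icc (-1:ℝ) 1 | AGAux.vseg φ G i t 0 = w n}) ∪
         (⋃ m : Fin M, {t ∈ Icc (-1:ℝ) 1 | AGAux.vseg φ G i t 1 = z m}))) ∪
      (⋃ j ∈ Iic G.My, (fun t => pt t (G.y j)) ''
        ((⋃ n : Fin M, {t ∈ Icc (-1:ℝ) 1 | AGAux.hseg φ G j t 0 = w n}) ∪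
         (⋃ m : Fin M, {t ∈ Icc (-1:ℝ) 1 | AGAux.hseg φ G j t 1 = z m})))).Finite := by
      refine Set.Finite.union ?_ ?_
      · refine Set.Finite.biUnion (Set.finite_Iic _) fun i hi => Set.Finite.image _ ?_
        exact (Set.finite_iUnion fun n => hLv i hi n).union
          (Set.finite_iUnion fun m => hLv1 i hi m)
      · refine Set.Finite.biUnion (Set.finite_Iic _) fun j hj => Set.Finite.image _ ?_
        exact (Set.finite_iUnion fun n => hLh j hj n).union
          (Set.finite_iUnion fun m => hLh1 j hj m)
    refine hbig.subset fun ζ hζ => ?_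
    obtain ⟨hζc, hζa⟩ := hζ
    rcases hcar ζ hζc with ⟨ht, i, hi, h0⟩ | ⟨ht, j, hj, h1⟩
    · refine Or.inl (mem_biUnion hi ⟨ζ 1, ?_, by show pt (G.x i) (ζ 1) = ζ; rw [← h0]; exact hpt ζ⟩)
      rcases hζa with ⟨n, hn⟩ | ⟨m, hm⟩
      · exact Or.inl (mem_iUnion.2 ⟨n, ht, by rw [hvseg_eq i ζ h0]; exact hn⟩)
      · exact Or.inr (mem_iUnion.2 ⟨m, ht, by rw [hvseg_eq i ζ h0]; exact hm⟩)
    · refine Or.inr (mem_biUnion hj ⟨ζ 0, ?_, by show pt (ζ 0) (G.y j) = ζ; rw [← h1]; exact hpt ζ⟩)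
      rcases hζa with ⟨n, hn⟩ | ⟨m, hm⟩
      · exact Or.inl (mem_iUnion.2 ⟨n, ht, by rw [hhseg_eq j ζ h1]; exact hn⟩)
      · exact Or.inr (mem_iUnion.2 ⟨m, ht, by rw [hhseg_eq j ζ h1]; exact hm⟩)
  · -- no crossing point of the grid in the preimage
    rintro ζ ⟨hζc, hζa⟩ ⟨⟨i, hi, h0⟩, ⟨j, hj, h1⟩⟩
    have hζCross : ζ ∈ Cross := ⟨i, hi, j, hj, by show pt (G.x i) (G.y j) = ζ; rw [← h0, ← h1]; exact hpt ζ⟩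
    rcases hζa with ⟨n, hn⟩ | ⟨m, hm⟩
    · exact hwc n ζ hζCross hn
    · exact hzc m ζ hζCross hm
  · -- crossing points of the arrival grid avoid the image
    rintro n m ⟨ζ, hζc, hζeq⟩
    have h0 : φ ζ 0 = w n := by rw [hζeq]; rfl
    have h1 : φ ζ 1 = z m := by rw [hζeq]; rfl
    rcases hcar ζ hζc with ⟨ht, i, hi, hx0'⟩ | ⟨ht, j, hj, hy1'⟩
    · refine hzA m (Or.inl (mem_biUnion hi (mem_iUnion.2 ⟨n, ⟨ζ 1, ⟨ht, ?_⟩, ?_⟩⟩)))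
      · show AGAux.vseg φ G i (ζ 1) 0 = w n
        rw [hvseg_eq i ζ hx0']; exact h0
      · show AGAux.vseg φ G i (ζ 1) 1 = z m
        rw [hvseg_eq i ζ hx0']; exact h1
    · refine hzA m (Or.inr (mem_biUnion hj (mem_iUnion.2 ⟨n, ⟨ζ 0, ⟨ht, ?_⟩, ?_⟩⟩)))
      · show AGAux.hseg φ G j (ζ 0) 0 = w n
        rw [hhseg_eq j ζ hy1']; exact h0
      · show AGAux.hseg φ G j (ζ 0) 1 = z m
        rw [hhseg_eq j ζ hy1']; exact h1
  · -- transversality at preimage points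
    rintro ζ ⟨hζc, hζa⟩
    have hUD : UniqueDiffOn ℝ (Icc (-1:ℝ) 1) := uniqueDiffOn_Icc (by norm_num)
    constructor
    · intro i hi h0
      have ht : ζ 1 ∈ Icc (-1:ℝ) 1 := by
        rcases hcar ζ hζc with ⟨ht, _⟩ | ⟨_, j, hj, h1⟩
        · exact ht
        · rw [h1]; exact hym j hj
      have hFζ := hvseg_eq i ζ h0
      have hdiff : ∃ d : R2, HasDerivWithinAt (AGAux.vseg φ G i) d (Icc (-1:ℝ) 1) (ζ 1) := by
        rcases hζa with ⟨n, hn⟩ | ⟨m, hm⟩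
        · obtain ⟨d, hd, -⟩ := AGAux.goodVal_spec 0 (hwv i hi n) (ζ 1) ht
            (by rw [hFζ]; exact hn)
          exact ⟨d, hd⟩
        · obtain ⟨d, hd, -⟩ := AGAux.goodVal_spec 1 (hzv i hi m) (ζ 1) ht
            (by rw [hFζ]; exact hm)
          exact ⟨d, hd⟩
      obtain ⟨d, hd⟩ := hdiff
      refine ⟨d, hd, ?_, ?_⟩
      · intro n hn
        obtain ⟨d', hd', hκ⟩ := AGAux.goodVal_spec 0 (hwv i hi n) (ζ 1) ht
          (by rw [hFζ]; exact hn)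
        have hdd : d = d' := UniqueDiffWithinAt.eq_deriv _ (hUD _ ht) hd hd'
        rw [hdd]
        exact linIndep_of_fst hκ
      · intro m hm
        obtain ⟨d', hd', hκ⟩ := AGAux.goodVal_spec 1 (hzv i hi m) (ζ 1) ht
          (by rw [hFζ]; exact hm)
        have hdd : d = d' := UniqueDiffWithinAt.eq_deriv _ (hUD _ ht) hd hd'
        rw [hdd]
        exact linIndep_of_snd hκ
    · intro j hj h1
      have ht : ζ 0 ∈ Icc (-1:ℝ) 1 := by
        rcases hcar ζ hζc with ⟨_, i, hi, h0⟩ | ⟨ht, _⟩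
        · rw [h0]; exact hxm i hi
        · exact ht
      have hFζ := hhseg_eq j ζ h1
      have hdiff : ∃ d : R2, HasDerivWithinAt (AGAux.hseg φ G j) d (Icc (-1:ℝ) 1) (ζ 0) := by
        rcases hζa with ⟨n, hn⟩ | ⟨m, hm⟩
        · obtain ⟨d, hd, -⟩ := AGAux.goodVal_spec 0 (hwh j hj n) (ζ 0) ht
            (by rw [hFζ]; exact hn)
          exact ⟨d, hd⟩
        · obtain ⟨d, hd, -⟩ := AGAux.goodVal_spec 1 (hzh j hj m) (ζ 0) ht
            (by rw [hFζ]; exact hm)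
          exact ⟨d, hd⟩
      obtain ⟨d, hd⟩ := hdiff
      refine ⟨d, hd, ?_, ?_⟩
      · intro n hn
        obtain ⟨d', hd', hκ⟩ := AGAux.goodVal_spec 0 (hwh j hj n) (ζ 0) ht
          (by rw [hFζ]; exact hn)
        have hdd : d = d' := UniqueDiffWithinAt.eq_deriv _ (hUD _ ht) hd hd'
        rw [hdd]
        exact linIndep_of_fst hκ
      · intro m hm
        obtain ⟨d', hd', hκ⟩ := AGAux.goodVal_spec 1 (hzh j hj m) (ζ 0) ht
          (by rw [hFζ]; exact hm)
        have hdd : d = d' := UniqueDiffWithinAt.eq_deriv _ (hUD _ ht) hd hd'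
        rw [hdd]
        exact linIndep_of_snd hκ
end
end

section
/- Let p ∈ [1,∞), let Γ_k be a k-grid, let φ ∈ W^{1,p}(Γ_k,ℝ²), and let (a,b) ∈ ℝ². Then for Lebesgue-almost every r > 0 the circle ∂B((a,b),r) is a good arrival curve for φ; namely: (i) F = φ⁻¹(∂B((a,b),r)) is finite and no point of F lies on two distinct segments of Γ_k; (ii) at every point of F the tangential derivative D_τφ exists and is linearly independent of the tangent direction of the circle ∂B((a,b),r) at the image point. -/
open MeasureTheory Set Filter Topology
open scoped ENNReal NNReal RealInnerProductSpace

noncomputable section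

theorem null_image_of_lipschitzOn {f : ℝ → ℝ} {s : Set ℝ} {K : ℝ≥0}
    (hf : LipschitzOnWith K f s) (hs : volume s = 0) : volume (f '' s) = 0 := by
  have h2 := hf.hausdorffMeasure_image_le (d := 1) zero_le_one
  rw [MeasureTheory.hausdorffMeasure_real] at h2
  simpa [hs] using h2

theorem sq_preimage_null {B : Set ℝ} (hB : volume B = 0) :
    volume {r : ℝ | 0 < r ∧ r ^ 2 ∈ B} = 0 := by
  have hcov : {r : ℝ | 0 < r ∧ r ^ 2 ∈ B} ⊆
      ⋃ n : ℕ, Real.sqrt '' (B ∩ Ici (1 / (n + 1))) := by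
    rintro r ⟨hr, hrB⟩
    obtain ⟨n, hn⟩ := exists_nat_gt (1 / r ^ 2)
    refine mem_iUnion.2 ⟨n, ⟨r ^ 2, ⟨hrB, ?_⟩, Real.sqrt_sq hr.le⟩⟩
    rw [mem_Ici, div_le_iff₀ (by positivity)]
    rw [div_lt_iff₀ (by positivity)] at hn
    nlinarith [sq_nonneg r]
  refine le_antisymm ?_ zero_le
  refine le_trans (measure_mono hcov) (le_trans (measure_iUnion_le _) ?_)
  have : ∀ n : ℕ, volume (Real.sqrt '' (B ∩ Ici (1 / (n + 1 : ℝ)))) = 0 := by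
    intro n
    set ε : ℝ := 1 / (n + 1 : ℝ) with hε
    have hε0 : 0 < ε := by positivity
    have hlip : LipschitzOnWith ((Real.sqrt ε)⁻¹).toNNReal Real.sqrt (Ici ε) := by
      rw [lipschitzOnWith_iff_dist_le_mul]
      intro x hx y hy
      rw [Real.dist_eq, Real.dist_eq, Real.coe_toNNReal _ (by positivity)]
      have hkey : ∀ a b : ℝ, ε ≤ a → ε ≤ b → b ≤ a →
          Real.sqrt a - Real.sqrt b ≤ (Real.sqrt ε)⁻¹ * |a - b| := by
        intro a b ha hb hba
        have h1 : Real.sqrt b ≤ Real.sqrt a := Real.sqrt_le_sqrt hba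
        have h2 : Real.sqrt ε ≤ Real.sqrt b := Real.sqrt_le_sqrt hb
        have h3 : 0 < Real.sqrt ε := Real.sqrt_pos.2 hε0
        have h4 : (Real.sqrt a - Real.sqrt b) * Real.sqrt ε ≤
            (Real.sqrt a - Real.sqrt b) * (Real.sqrt a + Real.sqrt b) := by
          apply mul_le_mul_of_nonneg_left _ (by linarith)
          linarith
        have h5 : (Real.sqrt a - Real.sqrt b) * (Real.sqrt a + Real.sqrt b) = a - b := by
          have := Real.sq_sqrt (le_trans hε0.le ha)
          have := Real.sq_sqrt (le_trans hε0.le hb)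
          nlinarith
        rw [inv_mul_eq_div, le_div_iff₀ h3]
        calc (Real.sqrt a - Real.sqrt b) * Real.sqrt ε ≤ a - b := by linarith
          _ ≤ |a - b| := le_abs_self _
      rcases le_total y x with hxy | hxy
      · rw [abs_of_nonneg (by linarith [Real.sqrt_le_sqrt hxy] :
          (0:ℝ) ≤ Real.sqrt x - Real.sqrt y)]
        exact hkey x y hx hy hxy
      · rw [abs_sub_comm, abs_of_nonneg (by linarith [Real.sqrt_le_sqrt hxy] :
          (0:ℝ) ≤ Real.sqrt y - Real.sqrt x), abs_sub_comm]
        exact hkey y x hy hx hxy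
    have : volume (B ∩ Ici ε) = 0 :=
      le_antisymm (le_trans (measure_mono inter_subset_left) hB.le) zero_le
    exact null_image_of_lipschitzOn (hlip.mono inter_subset_right) this
  exact le_of_eq (ENNReal.tsum_eq_zero.2 fun i => by simpa [one_div] using this i)


theorem primitive_ae_hasDerivAt {g : ℝ → R2} (hg : Integrable g) :
    ∀ᵐ t ∂(volume : Measure ℝ), HasDerivAt (fun x => ∫ s in (-1:ℝ)..x, g s) (g t) t := by
  filter_upwards [IsUnifLocDoublingMeasure.ae_tendsto_average_norm_sub volume
    hg.locallyIntegrable 1] with t ht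
  have hδ : Tendsto (fun x : ℝ => |x - t|) (𝓝[≠] t) (𝓝[>] 0) := by
    rw [tendsto_nhdsWithin_iff]
    constructor
    · have : Tendsto (fun x : ℝ => |x - t|) (𝓝 t) (𝓝 |t - t|) :=
        ((continuous_id.sub continuous_const).abs).continuousAt
      simpa using this.mono_left nhdsWithin_le_nhds
    · filter_upwards [self_mem_nhdsWithin] with x hx
      exact abs_pos.2 (sub_ne_zero.2 hx)
  have hmem : ∀ᶠ x : ℝ in 𝓝[≠] t, t ∈ Metric.closedBall t (1 * |x - t|) := by
    filter_upwards with x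
    simp [abs_nonneg]
  have A : Tendsto (fun x : ℝ => ⨍ y in Metric.closedBall t |x - t|, ‖g y - g t‖)
      (𝓝[≠] t) (𝓝 0) := ht (fun x : ℝ => t) (fun x => |x - t|) hδ hmem
  rw [hasDerivAt_iff_tendsto]
  have hP : ∀ x : ℝ, (∫ s in (-1:ℝ)..x, g s) - (∫ s in (-1:ℝ)..t, g s) - (x - t) • g t
      = ∫ s in t..x, (g s - g t) := by
    intro x
    rw [intervalIntegral.integral_sub hg.intervalIntegrable (intervalIntegrable_const),
      intervalIntegral.integral_interval_sub_left hg.intervalIntegrable hg.intervalIntegrable,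
      intervalIntegral.integral_const]
  have key : ∀ x : ℝ, x ≠ t →
      ‖x - t‖⁻¹ * ‖(∫ s in (-1:ℝ)..x, g s) - (∫ s in (-1:ℝ)..t, g s) - (x - t) • g t‖
        ≤ 2 * ⨍ y in Metric.closedBall t |x - t|, ‖g y - g t‖ := by
    intro x hx
    have hr : 0 < |x - t| := abs_pos.2 (sub_ne_zero.2 hx)
    have hsub : Set.uIoc t x ⊆ Metric.closedBall t |x - t| := by
      intro y hy
      rw [Set.mem_uIoc] at hy
      rw [Metric.mem_closedBall, Real.dist_eq]
      rcases hy with ⟨h1, h2⟩ | ⟨h1, h2⟩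
      · rw [abs_of_pos (by linarith)]
        have : x - t ≤ |x - t| := le_abs_self _
        linarith
      · rw [abs_of_nonpos (by linarith)]
        have : -(x - t) ≤ |x - t| := neg_le_abs _
        linarith
    have hint : IntegrableOn (fun y => ‖g y - g t‖) (Metric.closedBall t |x - t|) :=
      (hg.integrableOn.sub (integrableOn_const measure_closedBall_lt_top.ne)).norm
    have h1 : ‖∫ s in t..x, (g s - g t)‖ ≤ ∫ y in Metric.closedBall t |x - t|, ‖g y - g t‖ := by
      calc ‖∫ s in t..x, (g s - g t)‖ ≤ ‖∫ s in Set.uIoc t x, (g s - g t)‖ := by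
            rw [intervalIntegral.intervalIntegral_eq_integral_uIoc]
            rcases le_or_gt t x with h | h
            · simp [h]
            · simp [not_le.2 h, norm_smul]
        _ ≤ ∫ s in Set.uIoc t x, ‖g s - g t‖ := norm_integral_le_integral_norm _
        _ ≤ ∫ y in Metric.closedBall t |x - t|, ‖g y - g t‖ := by
            apply setIntegral_mono_set hint
            · filter_upwards with y using norm_nonneg _
            · exact HasSubset.Subset.eventuallyLE hsub
    have hvol : (volume (Metric.closedBall t |x - t|)).toReal = 2 * |x - t| := by
      rw [Real.volume_closedBall]
      rw [ENNReal.toReal_ofReal (by linarith)]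
    have havg : ∫ y in Metric.closedBall t |x - t|, ‖g y - g t‖
        = (2 * |x - t|) * ⨍ y in Metric.closedBall t |x - t|, ‖g y - g t‖ := by
      rw [setAverage_eq, measureReal_def, hvol, smul_eq_mul, ← mul_assoc]
      rw [mul_inv_cancel₀ (by positivity), one_mul]
    rw [hP x, Real.norm_eq_abs]
    calc |x - t|⁻¹ * ‖∫ s in t..x, (g s - g t)‖
        ≤ |x - t|⁻¹ * ((2 * |x - t|) * ⨍ y in Metric.closedBall t |x - t|, ‖g y - g t‖) := by
          rw [← havg]
          exact mul_le_mul_of_nonneg_left h1 (by positivity)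
      _ = 2 * ⨍ y in Metric.closedBall t |x - t|, ‖g y - g t‖ := by
          field_simp
    done
  rw [← nhdsNE_sup_pure, tendsto_sup]
  constructor
  · apply squeeze_zero'
    · filter_upwards with x using by positivity
    · filter_upwards [self_mem_nhdsWithin] with x hx using key x hx
    · simpa using A.const_mul 2
  · have : ‖t - t‖⁻¹ * ‖(∫ s in (-1:ℝ)..t, g s) - (∫ s in (-1:ℝ)..t, g s) - (t - t) • g t‖ = 0 := by
      simp
    rw [tendsto_pure_left]
    intro s hs
    simpa [this] using mem_of_mem_nhds hs


theorem exists_orderIso_primitive (h : ℝ → ℝ) (hh : Integrable h) (hpos : ∀ x, 0 ≤ h x) :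
    ∃ e : ℝ ≃o ℝ, (∀ x, e x = x + ∫ s in (-1:ℝ)..x, h s) ∧
      ∀ N : Set ℝ, volume N = 0 → volume (e '' N) = 0 := by
  set τ : ℝ → ℝ := fun x => x + ∫ s in (-1:ℝ)..x, h s with hτ
  have hdiff : ∀ a b : ℝ, τ b - τ a = (b - a) + ∫ s in a..b, h s := by
    intro a b
    have := intervalIntegral.integral_interval_sub_left
      (hh.intervalIntegrable (a := -1) (b := b)) (hh.intervalIntegrable (a := -1) (b := a))
    simp only [hτ]
    linarith [this]
  have hmono : StrictMono τ := by
    intro a b hab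
    have h0 : 0 ≤ ∫ s in a..b, h s :=
      intervalIntegral.integral_nonneg hab.le (fun x _ => hpos x)
    have := hdiff a b
    linarith
  have hcont : Continuous τ :=
    continuous_id.add (intervalIntegral.continuous_primitive
      (fun a b => hh.intervalIntegrable) (-1))
  have hsurj : Function.Surjective τ := by
    apply hcont.surjective
    · apply tendsto_atTop_mono' _ _ tendsto_id
      filter_upwards [eventually_ge_atTop (-1 : ℝ)] with x hx
      have : 0 ≤ ∫ s in (-1:ℝ)..x, h s :=
        intervalIntegral.integral_nonneg hx (fun s _ => hpos s)
      simp only [hτ, id]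
      linarith
    · apply tendsto_atBot_mono' _ _ tendsto_id
      filter_upwards [eventually_le_atBot (-1 : ℝ)] with x hx
      have : 0 ≤ ∫ s in x..(-1:ℝ), h s :=
        intervalIntegral.integral_nonneg hx (fun s _ => hpos s)
      have h2 : ∫ s in (-1:ℝ)..x, h s = - ∫ s in x..(-1:ℝ), h s :=
        (intervalIntegral.integral_symm _ _)
      simp only [hτ, id]
      linarith
  refine ⟨StrictMono.orderIsoOfSurjective τ hmono hsurj, fun x => rfl, ?_⟩
  set e := StrictMono.orderIsoOfSurjective τ hmono hsurj with he
  have hex : ∀ x, e x = τ x := fun x => rfl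
  intro N hN
  set ν : Measure ℝ := Measure.map (e.symm : ℝ → ℝ) volume with hν
  have hmeas : Measurable (e.symm : ℝ → ℝ) := e.symm.continuous.measurable
  have hνIoc : ∀ a b : ℝ, ν (Ioc a b) = ENNReal.ofReal (τ b - τ a) := by
    intro a b
    rw [hν, Measure.map_apply hmeas measurableSet_Ioc]
    have hpre : (e.symm : ℝ → ℝ) ⁻¹' Ioc a b = Ioc (e a) (e b) := by
      ext x
      simp only [mem_preimage, mem_Ioc]
      constructor
      · rintro ⟨h1, h2⟩
        refine ⟨?_, ?_⟩
        · have := e.lt_iff_lt.2 h1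
          rwa [e.apply_symm_apply] at this
        · have := e.le_iff_le.2 h2
          rwa [e.apply_symm_apply] at this
      · rintro ⟨h1, h2⟩
        refine ⟨?_, ?_⟩
        · have := e.symm.lt_iff_lt.2 h1
          rwa [e.symm_apply_apply] at this
        · have := e.symm.le_iff_le.2 h2
          rwa [e.symm_apply_apply] at this
    rw [hpre, hex, hex, Real.volume_Ioc]
  set ρ : Measure ℝ := volume.withDensity (fun x => ENNReal.ofReal (1 + h x)) with hρ
  have hρIoc : ∀ a b : ℝ, a < b → ρ (Ioc a b) = ENNReal.ofReal (τ b - τ a) := by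
    intro a b hab
    rw [hρ, withDensity_apply _ measurableSet_Ioc]
    rw [← MeasureTheory.ofReal_integral_eq_lintegral_ofReal]
    · congr 1
      have h1 : ∫ x in Ioc a b, (1 + h x) = (∫ _x in Ioc a b, (1:ℝ)) + ∫ x in Ioc a b, h x :=
        integral_add (integrableOn_const measure_Ioc_lt_top.ne) hh.integrableOn
      rw [h1, setIntegral_const, Real.volume_real_Ioc, smul_eq_mul, mul_one,
        max_eq_left (by linarith), hdiff a b,
        intervalIntegral.integral_of_le hab.le]
    · exact (integrableOn_const measure_Ioc_lt_top.ne).add hh.integrableOn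
    · exact ae_of_all _ fun x => by simp only [Pi.zero_apply]; linarith [hpos x]
  have hνρ : ν = ρ := by
    apply MeasureTheory.Measure.ext_of_Ioc' ν ρ
    · intro a b hab
      rw [hνIoc a b]
      exact ENNReal.ofReal_ne_top
    · intro a b hab
      rw [hνIoc a b, hρIoc a b hab]
  have hN' : volume (toMeasurable volume N) = 0 := by
    rwa [measure_toMeasurable]
  have hsub : e '' N ⊆ (e.symm : ℝ → ℝ) ⁻¹' (toMeasurable volume N) := by
    rintro x ⟨n, hn, rfl⟩
    simp only [mem_preimage, OrderIso.symm_apply_apply]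
    exact subset_toMeasurable _ _ hn
  refine le_antisymm ?_ zero_le
  calc volume (e '' N) ≤ volume ((e.symm : ℝ → ℝ) ⁻¹' (toMeasurable volume N)) :=
        measure_mono hsub
    _ = ν (toMeasurable volume N) :=
        (Measure.map_apply hmeas (measurableSet_toMeasurable _ _)).symm
    _ = ρ (toMeasurable volume N) := by rw [hνρ]
    _ = 0 := by
        rw [hρ, withDensity_apply _ (measurableSet_toMeasurable _ _)]
        rw [Measure.restrict_eq_zero.2 hN']
        simp


theorem oneD_good_radii {f g : ℝ → R2} (hfg : IsACDerivOn f g (-1) 1) (c : R2) :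
    ∀ᵐ r ∂(volume : Measure ℝ), 0 < r →
      {t ∈ Icc (-1:ℝ) 1 | f t ∈ Metric.sphere c r}.Finite ∧
      ∀ t ∈ Icc (-1:ℝ) 1, f t ∈ Metric.sphere c r →
        ∃ d, HasDerivWithinAt f d (Icc (-1:ℝ) 1) t ∧ ⟪d, f t - c⟫ ≠ 0 := by
  obtain ⟨hgint, hfrep⟩ := hfg
  set g' : ℝ → R2 := (Icc (-1:ℝ) 1).indicator g with hg'def
  have hg' : Integrable g' := hgint.integrable_indicator measurableSet_Icc
  set P : ℝ → R2 := fun x => ∫ s in (-1:ℝ)..x, g' s with hPdef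
  set F : ℝ → R2 := fun x => f (-1) + P x with hFdef
  have hFf : ∀ t ∈ Icc (-1:ℝ) 1, f t = F t := by
    intro t ht
    rw [hfrep t ht]
    congr 1
    refine (intervalIntegral.integral_congr fun s hs => ?_).symm
    have hsub : uIcc (-1:ℝ) t ⊆ Icc (-1:ℝ) 1 := by
      rw [uIcc_of_le ht.1]
      exact Icc_subset_Icc le_rfl ht.2
    exact indicator_of_mem (hsub hs) g
  have hPc : Continuous P :=
    intervalIntegral.continuous_primitive (fun a b => hg'.intervalIntegrable) (-1)
  have hFc : Continuous F := continuous_const.add hPc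
  set F2 : ℝ → ℝ := fun x => ⟪F x - c, F x - c⟫ with hF2def
  have hF2c : Continuous F2 := (hFc.sub continuous_const).inner (hFc.sub continuous_const)
  obtain ⟨R, hR⟩ := isCompact_Icc.exists_bound_of_continuousOn
    (s := Icc (-1:ℝ) 1) (hFc.sub continuous_const : Continuous fun x => F x - c).continuousOn
  have hR0 : 0 ≤ R := le_trans (norm_nonneg _) (hR (-1) ⟨le_refl _, by norm_num⟩)
  set h : ℝ → ℝ := fun x => 2 * R * ‖g' x‖ with hhdef
  have hh : Integrable h := hg'.norm.const_mul _
  have hpos : ∀ x, 0 ≤ h x := fun x => by positivity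
  obtain ⟨e, hex, hnull⟩ := exists_orderIso_primitive h hh hpos
  -- key inequality
  have hF2diff : ∀ s t : ℝ, s ∈ Icc (-1:ℝ) 1 → t ∈ Icc (-1:ℝ) 1 → s ≤ t →
      |F2 t - F2 s| ≤ e t - e s := by
    intro s t hs ht hst
    have hab : F t - F s = ∫ u in s..t, g' u := by
      have h0 := intervalIntegral.integral_interval_sub_left
        (hg'.intervalIntegrable (a := -1) (b := t)) (hg'.intervalIntegrable (a := -1) (b := s))
      simp only [hFdef, hPdef]
      rw [← h0]
      abel
    have h1 : ‖F t - F s‖ ≤ ∫ u in s..t, ‖g' u‖ := by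
      rw [hab]
      refine le_trans (intervalIntegral.norm_integral_le_abs_integral_norm) ?_
      rw [abs_of_nonneg (intervalIntegral.integral_nonneg hst fun u _ => norm_nonneg _)]
    have h2 : F2 t - F2 s = ⟪F t - F s, (F t - c) + (F s - c)⟫ := by
      have ha : F t - F s = (F t - c) - (F s - c) := by abel
      rw [ha, inner_sub_left, inner_add_right, inner_add_right,
        real_inner_comm (F s - c) (F t - c)]
      simp only [hF2def]
      ring
    have h3 : |F2 t - F2 s| ≤ 2 * R * ‖F t - F s‖ := by
      rw [h2]
      calc |⟪F t - F s, (F t - c) + (F s - c)⟫|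
          ≤ ‖F t - F s‖ * ‖(F t - c) + (F s - c)‖ := abs_real_inner_le_norm _ _
        _ ≤ ‖F t - F s‖ * (2 * R) := by
            refine mul_le_mul_of_nonneg_left ?_ (norm_nonneg _)
            refine le_trans (norm_add_le _ _) ?_
            have : ‖F t - c‖ ≤ R := hR t ht; have : ‖F s - c‖ ≤ R := hR s hs; linarith
        _ = 2 * R * ‖F t - F s‖ := mul_comm _ _
    have h4 : (2 * R) * ∫ u in s..t, ‖g' u‖ = ∫ u in s..t, h u := by
      rw [← intervalIntegral.integral_const_mul]
    have h5 : e t - e s = (t - s) + ∫ u in s..t, h u := by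
      rw [hex, hex]
      have h0 := intervalIntegral.integral_interval_sub_left
        (hh.intervalIntegrable (a := -1) (b := t)) (hh.intervalIntegrable (a := -1) (b := s))
      rw [← h0]; ring
    have h6 : 2 * R * ‖F t - F s‖ ≤ ∫ u in s..t, h u := by
      rw [← h4]
      exact mul_le_mul_of_nonneg_left h1 (by positivity)
    linarith [h3, h6]
  -- null sets
  have hD := primitive_ae_hasDerivAt hg'
  rw [ae_iff] at hD
  set N : Set ℝ := Icc (-1:ℝ) 1 ∩ {t | ¬ HasDerivAt P (g' t) t} with hNdef
  have hNnull : volume N = 0 :=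
    le_antisymm (le_trans (measure_mono inter_subset_right) (le_of_eq hD)) zero_le
  set Z : Set ℝ := {t | t ∈ Icc (-1:ℝ) 1 ∧ HasDerivAt P (g' t) t ∧ ⟪g' t, F t - c⟫ = 0}
    with hZdef
  have hF2dAt : ∀ t : ℝ, HasDerivAt P (g' t) t → HasDerivAt F2 (2 * ⟪g' t, F t - c⟫) t := by
    intro t hP
    have hF' : HasDerivAt (fun x => F x - c) (g' t) t := (hP.const_add (f (-1))).sub_const c
    have h0 := hF'.inner ℝ hF'
    refine h0.congr_deriv ?_
    rw [real_inner_comm (F t - c) (g' t)]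
    ring
  have hZder : ∀ t ∈ Z, HasDerivWithinAt F2 0 Z t := by
    rintro t ⟨-, hP, hinner⟩
    have h1 := hF2dAt t hP
    rw [hinner, mul_zero] at h1
    exact h1.hasDerivWithinAt
  have hZnull : volume (F2 '' Z) = 0 := by
    refine MeasureTheory.addHaar_image_eq_zero_of_det_fderivWithin_eq_zero volume
      (f' := fun _ => ContinuousLinearMap.smulRight (1 : ℝ →L[ℝ] ℝ) (0:ℝ))
      (fun t ht => (hZder t ht).hasFDerivWithinAt) (fun t _ => ?_)
    have h0 : (ContinuousLinearMap.smulRight (1 : ℝ →L[ℝ] ℝ) (0:ℝ)) = 0 := by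
      ext x; simp
    rw [h0]
    have h1 : ((0 : ℝ →L[ℝ] ℝ) : ℝ →ₗ[ℝ] ℝ) = (0 : ℝ) • LinearMap.id := by ext; simp
    show LinearMap.det _ = 0
    rw [h1, LinearMap.det_smul]
    simp
  have hNimg : volume (F2 '' N) = 0 := by
    have hcomp : F2 '' N = (fun x => F2 (e.symm x)) '' ((e : ℝ → ℝ) '' N) := by
      rw [← image_comp]
      congr 1
      funext x
      simp [Function.comp, e.symm_apply_apply]
    rw [hcomp]
    have hlip : LipschitzOnWith 1 (fun x => F2 (e.symm x)) ((e : ℝ → ℝ) '' Icc (-1:ℝ) 1) := by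
      rw [lipschitzOnWith_iff_dist_le_mul]
      rintro x ⟨sx, hsx, rfl⟩ y ⟨sy, hsy, rfl⟩
      simp only [e.symm_apply_apply]
      rw [Real.dist_eq, Real.dist_eq, NNReal.coe_one, one_mul]
      rcases le_total sx sy with hle | hle
      · rw [abs_sub_comm (F2 sx) (F2 sy), abs_sub_comm ((e : ℝ → ℝ) sx) ((e : ℝ → ℝ) sy),
          abs_of_nonneg (sub_nonneg.2 (e.le_iff_le.2 hle))]
        exact hF2diff sx sy hsx hsy hle
      · rw [abs_of_nonneg (sub_nonneg.2 (e.le_iff_le.2 hle))]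
        exact hF2diff sy sx hsy hsx hle
    exact null_image_of_lipschitzOn
      (hlip.mono (image_mono inter_subset_left)) (hnull N hNnull)
  set B2 : Set ℝ := F2 '' N ∪ F2 '' Z ∪ {F2 (-1), F2 1} with hB2def
  have hB2null : volume B2 = 0 := by
    refine measure_union_null (measure_union_null hNimg hZnull) ?_
    exact measure_union_null (measure_singleton _) (measure_singleton _)
  have hBadnull := sq_preimage_null hB2null
  filter_upwards [(MeasureTheory.measure_eq_zero_iff_ae_notMem
    (μ := (volume : Measure ℝ))).1 hBadnull] with r hrB hrpos
  have hq : r ^ 2 ∉ B2 := fun hmem => hrB ⟨hrpos, hmem⟩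
  -- equivalence of sphere and F2 level set on Icc
  have hiff : ∀ t ∈ Icc (-1:ℝ) 1, (f t ∈ Metric.sphere c r ↔ F2 t = r ^ 2) := by
    intro t ht
    rw [Metric.mem_sphere, dist_eq_norm, hFf t ht]
    simp only [hF2def]
    rw [real_inner_self_eq_norm_sq]
    constructor
    · intro h; rw [h]
    · intro h
      nlinarith [norm_nonneg (F t - c)]
  -- pointwise derivative statement
  have hder : ∀ t ∈ Icc (-1:ℝ) 1, f t ∈ Metric.sphere c r →
      HasDerivAt P (g' t) t ∧ ⟪g' t, F t - c⟫ ≠ 0 ∧ t ≠ -1 ∧ t ≠ 1 := by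
    intro t ht hsp
    have hF2t : F2 t = r ^ 2 := (hiff t ht).1 hsp
    have hD : HasDerivAt P (g' t) t := by
      by_contra hcon
      exact hq (Or.inl (Or.inl ⟨t, ⟨ht, hcon⟩, hF2t⟩))
    refine ⟨hD, ?_, ?_, ?_⟩
    · intro hcon
      exact hq (Or.inl (Or.inr ⟨t, ⟨ht, hD, hcon⟩, hF2t⟩))
    · rintro rfl
      exact hq (Or.inr (Or.inl hF2t.symm))
    · rintro rfl
      exact hq (Or.inr (Or.inr hF2t.symm))
  constructor
  · -- finiteness
    set S : Set ℝ := {t ∈ Icc (-1:ℝ) 1 | f t ∈ Metric.sphere c r} with hSdef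
    have hSeq : S = Icc (-1:ℝ) 1 ∩ F2 ⁻¹' {r ^ 2} := by
      ext t
      simp only [hSdef, mem_sep_iff, mem_inter_iff, mem_preimage, mem_singleton_iff]
      exact ⟨fun ⟨h1, h2⟩ => ⟨h1, (hiff t h1).1 h2⟩, fun ⟨h1, h2⟩ => ⟨h1, (hiff t h1).2 h2⟩⟩
    have hSclosed : IsClosed S := by
      rw [hSeq]
      exact isClosed_Icc.inter (isClosed_singleton.preimage hF2c)
    have hScomp : IsCompact S := by
      refine IsCompact.of_isClosed_subset (isCompact_Icc (a := (-1:ℝ)) (b := 1)) hSclosed ?_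
      rw [hSeq]; exact inter_subset_left
    have hiso : ∀ t ∈ S, ∃ U : Set ℝ, U ∈ 𝓝 t ∧ ∀ x ∈ U ∩ S, x = t := by
      intro t htS
      obtain ⟨ht, hsp⟩ := htS
      obtain ⟨hD, hinner, -, -⟩ := hder t ht hsp
      have hslope := hasDerivAt_iff_tendsto_slope.1 (hF2dAt t hD)
      have hne : ∀ᶠ x in 𝓝[≠] t, slope F2 t x ≠ 0 :=
        hslope.eventually_ne (by simpa using hinner)
      rw [eventually_nhdsWithin_iff] at hne
      obtain ⟨U, hU, hUp⟩ := eventually_iff_exists_mem.1 hne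
      refine ⟨U, hU, ?_⟩
      rintro x ⟨hxU, hxIcc, hxsp⟩
      by_contra hxt
      have hFx : F2 x = F2 t := by
        rw [(hiff x hxIcc).1 hxsp, (hiff t ht).1 hsp]
      have := hUp x hxU (by simpa using hxt)
      apply this
      rw [slope_def_field, hFx]
      simp
    choose! U hU1 hU2 using hiso
    obtain ⟨T, hTS, hcover⟩ := hScomp.elim_nhds_subcover U (fun t ht => hU1 t ht)
    refine Set.Finite.subset T.finite_toSet ?_
    intro x hx
    obtain ⟨t, htT, hxU⟩ := mem_iUnion₂.1 (hcover hx)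
    have := hU2 t (hTS t htT) x ⟨hxU, hx⟩
    rwa [this]
  · -- derivative statement
    intro t ht hsp
    obtain ⟨hD, hinner, -, -⟩ := hder t ht hsp
    refine ⟨g' t, ?_, ?_⟩
    · have hFd : HasDerivWithinAt F (g' t) (Icc (-1:ℝ) 1) t :=
        ((hD.const_add (f (-1)))).hasDerivWithinAt
      exact hFd.congr (fun x hx => hFf x hx) (hFf t ht)
    · rwa [hFf t ht]


theorem pt_eta (z : R2) : pt (z 0) (z 1) = z := by
  ext i; fin_cases i <;> rfl

theorem inner_R2 (x y : R2) : ⟪x, y⟫ = x 0 * y 0 + x 1 * y 1 := by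
  simp [PiLp.inner_apply, Fin.sum_univ_two, RCLike.inner_apply, mul_comm]

theorem linIndep_circleTangent {d q c : R2} (hqc : q ≠ c) (hinner : ⟪d, q - c⟫ ≠ 0) :
    LinearIndependent ℝ ![d, circleTangent c q] := by
  rw [LinearIndependent.pair_iff]
  intro s t hst
  have hT : ⟪circleTangent c q, q - c⟫ = 0 := by
    rw [inner_R2]
    have h0 : circleTangent c q 0 = -(q 1 - c 1) := rfl
    have h1 : circleTangent c q 1 = q 0 - c 0 := rfl
    have h2 : (q - c) 0 = q 0 - c 0 := rfl
    have h3 : (q - c) 1 = q 1 - c 1 := rfl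
    rw [h0, h1, h2, h3]; ring
  have h1 : ⟪s • d + t • circleTangent c q, q - c⟫ = 0 := by
    rw [hst, inner_zero_left]
  rw [inner_add_left, real_inner_smul_left, real_inner_smul_left, hT, mul_zero, add_zero] at h1
  have hs : s = 0 := by
    rcases mul_eq_zero.1 h1 with h | h
    · exact h
    · exact absurd h hinner
  subst hs
  rw [zero_smul, zero_add] at hst
  refine ⟨rfl, ?_⟩
  rcases smul_eq_zero.1 hst with h | h
  · exact h
  · exfalso
    apply hqc
    have h0 : q 1 - c 1 = 0 := by
      have h' : -(q 1 - c 1) = 0 := congrArg (fun v : R2 => v 0) h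
      linarith
    have h1 : q 0 - c 0 = 0 := congrArg (fun v : R2 => v 1) h
    ext i; fin_cases i
    · simpa [sub_eq_zero] using h1
    · simpa [sub_eq_zero] using h0

theorem grid_coord_bounds {M : ℕ} {x : ℕ → ℝ} (h0 : x 0 = -1) (hM : x M = 1)
    (hstep : ∀ i < M, x i < x (i + 1)) : ∀ i ≤ M, x i ∈ Icc (-1 : ℝ) 1 := by
  have mono : ∀ n j, j + n ≤ M → x j ≤ x (j + n) := by
    intro n
    induction n with
    | zero => intro j _; simp
    | succ m ih =>
      intro j hj
      have h1 := ih j (by omega)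
      have h2 : x (j + m) < x (j + m + 1) := hstep _ (by omega)
      have : j + (m + 1) = j + m + 1 := by omega
      rw [this]
      linarith
  intro i hi
  constructor
  · have := mono i 0 (by omega)
    rw [Nat.zero_add] at this
    rw [← h0]; exact this
  · have := mono (M - i) i (by omega)
    rw [(by omega : i + (M - i) = M)] at this
    rw [← hM]; exact this


/-- for a.e. r > 0 the circle ∂B((a,b),r) is a good arrival curve for
φ ∈ W^{1,p}(Γ_k,ℝ²). -/
theorem ae_good_arrival_circle
    (p : ℝ) (hp : 1 ≤ p) (k : ℕ) (G : GridData) (hG : G.IsKGrid k)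
    (φ : R2 → R2) (hφ : MemW1pGrid p G φ) (c : R2) :
    ∀ᵐ r ∂(volume : Measure ℝ), 0 < r →
      {ζ ∈ G.carrier | φ ζ ∈ Metric.sphere c r}.Finite ∧
      (∀ ζ ∈ {ζ ∈ G.carrier | φ ζ ∈ Metric.sphere c r}, ¬ G.IsCrossPt ζ) ∧
      (∀ ζ ∈ {ζ ∈ G.carrier | φ ζ ∈ Metric.sphere c r},
        (∀ i, i ≤ G.Mx → ζ 0 = G.x i →
          ∃ d, HasDerivWithinAt (fun t => φ (pt (G.x i) t)) d (Icc (-1:ℝ) 1) (ζ 1) ∧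
            LinearIndependent ℝ ![d, circleTangent c (φ ζ)]) ∧
        (∀ j, j ≤ G.My → ζ 1 = G.y j →
          ∃ d, HasDerivWithinAt (fun t => φ (pt t (G.y j))) d (Icc (-1:ℝ) 1) (ζ 0) ∧
            LinearIndependent ℝ ![d, circleTangent c (φ ζ)])) := by
  obtain ⟨hx0, hxM, hy0, hyM, hgx, hgy⟩ := hG
  have hpow : (0:ℝ) < (2:ℝ) ^ (-(k:ℤ)) := zpow_pos (by norm_num) _
  have hxI : ∀ i ≤ G.Mx, G.x i ∈ Icc (-1:ℝ) 1 :=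
    grid_coord_bounds hx0 hxM (fun i hi => by linarith [(hgx i hi).1])
  have hyI : ∀ j ≤ G.My, G.y j ∈ Icc (-1:ℝ) 1 :=
    grid_coord_bounds hy0 hyM (fun j hj => by linarith [(hgy j hj).1])
  obtain ⟨dv, dh, hdv, hdh⟩ := hφ
  have hV : ∀ i : ℕ, ∀ᵐ r ∂(volume : Measure ℝ), 0 < r → i ≤ G.Mx →
      ({t ∈ Icc (-1:ℝ) 1 | φ (pt (G.x i) t) ∈ Metric.sphere c r}.Finite ∧
       ∀ t ∈ Icc (-1:ℝ) 1, φ (pt (G.x i) t) ∈ Metric.sphere c r →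
         ∃ d, HasDerivWithinAt (fun s => φ (pt (G.x i) s)) d (Icc (-1:ℝ) 1) t ∧
           ⟪d, φ (pt (G.x i) t) - c⟫ ≠ 0) := by
    intro i
    by_cases hi : i ≤ G.Mx
    · filter_upwards [oneD_good_radii (hdv i hi).1 c] with r hr hrpos _
      exact hr hrpos
    · filter_upwards with r _ hcon
      exact absurd hcon hi
  have hH : ∀ j : ℕ, ∀ᵐ r ∂(volume : Measure ℝ), 0 < r → j ≤ G.My →
      ({t ∈ Icc (-1:ℝ) 1 | φ (pt t (G.y j)) ∈ Metric.sphere c r}.Finite ∧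
       ∀ t ∈ Icc (-1:ℝ) 1, φ (pt t (G.y j)) ∈ Metric.sphere c r →
         ∃ d, HasDerivWithinAt (fun s => φ (pt s (G.y j))) d (Icc (-1:ℝ) 1) t ∧
           ⟪d, φ (pt t (G.y j)) - c⟫ ≠ 0) := by
    intro j
    by_cases hj : j ≤ G.My
    · filter_upwards [oneD_good_radii (hdh j hj).1 c] with r hr hrpos _
      exact hr hrpos
    · filter_upwards with r _ hcon
      exact absurd hcon hj
  have hcrossfin : {ζ : R2 | G.IsCrossPt ζ}.Finite := by
    refine Set.Finite.subset (((finite_Iic G.Mx).prod (finite_Iic G.My)).image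
      (fun p : ℕ × ℕ => pt (G.x p.1) (G.y p.2))) ?_
    rintro ζ ⟨⟨i, hi, hxi⟩, ⟨j, hj, hyj⟩⟩
    refine ⟨(i, j), ⟨hi, hj⟩, ?_⟩
    show pt (G.x i) (G.y j) = ζ
    rw [← hxi, ← hyj]
    exact pt_eta ζ
  have hCross : ∀ᵐ r ∂(volume : Measure ℝ),
      r ∉ (fun ζ => dist (φ ζ) c) '' {ζ : R2 | G.IsCrossPt ζ} :=
    (MeasureTheory.measure_eq_zero_iff_ae_notMem (μ := (volume : Measure ℝ))).1
      ((hcrossfin.image _).measure_zero _)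
  filter_upwards [ae_all_iff.2 hV, ae_all_iff.2 hH, hCross] with r hVr hHr hCr hrpos
  have hnc : ∀ ζ ∈ {ζ ∈ G.carrier | φ ζ ∈ Metric.sphere c r}, ¬ G.IsCrossPt ζ := by
    rintro ζ ⟨hζG, hζS⟩ hcross
    exact hCr ⟨ζ, hcross, Metric.mem_sphere.1 hζS⟩
  have hcarr : ∀ ζ ∈ G.carrier, ζ 0 ∈ Icc (-1:ℝ) 1 ∧ ζ 1 ∈ Icc (-1:ℝ) 1 := by
    rintro ζ (⟨h1, i, hi, hxi⟩ | ⟨h1, j, hj, hyj⟩)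
    · exact ⟨by rw [hxi]; exact hxI i hi, h1⟩
    · exact ⟨h1, by rw [hyj]; exact hyI j hj⟩
  refine ⟨?_, hnc, ?_⟩
  · have hsub : {ζ ∈ G.carrier | φ ζ ∈ Metric.sphere c r} ⊆
        (⋃ i ∈ Iic G.Mx, (fun t => pt (G.x i) t) ''
          {t ∈ Icc (-1:ℝ) 1 | φ (pt (G.x i) t) ∈ Metric.sphere c r}) ∪
        (⋃ j ∈ Iic G.My, (fun t => pt t (G.y j)) ''
          {t ∈ Icc (-1:ℝ) 1 | φ (pt t (G.y j)) ∈ Metric.sphere c r}) := by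
      rintro ζ ⟨hζG, hζS⟩
      rcases hζG with ⟨h1, i, hi, hxi⟩ | ⟨h1, j, hj, hyj⟩
      · left
        have hpt : pt (G.x i) (ζ 1) = ζ := by rw [← hxi]; exact pt_eta ζ
        exact mem_biUnion hi ⟨ζ 1, ⟨h1, by rw [hpt]; exact hζS⟩, hpt⟩
      · right
        have hpt : pt (ζ 0) (G.y j) = ζ := by rw [← hyj]; exact pt_eta ζ
        exact mem_biUnion hj ⟨ζ 0, ⟨h1, by rw [hpt]; exact hζS⟩, hpt⟩
    refine Set.Finite.subset (Set.Finite.union ?_ ?_) hsub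
    · exact Set.Finite.biUnion (finite_Iic _) fun i hi => ((hVr i hrpos hi).1).image _
    · exact Set.Finite.biUnion (finite_Iic _) fun j hj => ((hHr j hrpos hj).1).image _
  · rintro ζ ⟨hζG, hζS⟩
    have hq : φ ζ ≠ c := by
      intro h
      have := Metric.mem_sphere.1 hζS
      rw [h, dist_self] at this
      exact absurd this.symm (ne_of_gt hrpos)
    constructor
    · intro i hi hxi
      have hz1 : ζ 1 ∈ Icc (-1:ℝ) 1 := (hcarr ζ hζG).2
      have hpt : pt (G.x i) (ζ 1) = ζ := by rw [← hxi]; exact pt_eta ζ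
      obtain ⟨d, hd, hinner⟩ := (hVr i hrpos hi).2 (ζ 1) hz1 (by rw [hpt]; exact hζS)
      rw [hpt] at hinner
      exact ⟨d, hd, linIndep_circleTangent hq hinner⟩
    · intro j hj hyj
      have hz0 : ζ 0 ∈ Icc (-1:ℝ) 1 := (hcarr ζ hζG).1
      have hpt : pt (ζ 0) (G.y j) = ζ := by rw [← hyj]; exact pt_eta ζ
      obtain ⟨d, hd, hinner⟩ := (hHr j hrpos hj).2 (ζ 0) hz0 (by rw [hpt]; exact hζS)
      rw [hpt] at hinner
      exact ⟨d, hd, linIndep_circleTangent hq hinner⟩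
end
end
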